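/- arXiv:2310.12030 — 7 statements merged into one kernel-verified Lean document; each statement's English description precedes it below -/
import Mathlib

section
/- Let M be an infinite matrix with no vanishing columns and p ≥ 1. Then the normed space (ℓ^p_M, ‖·‖_{M,p}) is complete, i.e., every Cauchy sequence in ℓ^p_M converges in ℓ^p_M. -/
/-! Each column of `M` has a nonzero entry `m n k`, and `|m n k| |x k| ≤ ‖x‖_{M,p}`, so a Cauchy
sequence is Cauchy in every coordinate and has a coordinatewise limit `y`. Fatou's lemma, applied
to the inner and to the outer series, bounds `‖x i - y‖_{M,p}` by `liminf_j ‖x i - x j‖_{M,p}`,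
which is small for large `i`; Minkowski's inequality then puts `y` in `ℓ^p_M`. -/

open scoped ENNReal NNReal

noncomputable def eNorm (m : ℕ → ℕ → ℂ) (p : ℝ) (x : ℕ → ℂ) : ℝ≥0∞ :=
  (∑' n : ℕ, (∑' k : ℕ, (‖m n k‖₊ : ℝ≥0∞) * (‖x k‖₊ : ℝ≥0∞)) ^ p) ^ (1 / p)

open Filter MeasureTheory Topology

namespace ENNReal

variable {α : Type*}

theorem tsum_liminf_le_liminf_tsum (f : ℕ → α → ℝ≥0∞) :
    ∑' a, liminf (fun j => f j a) atTop ≤ liminf (fun j => ∑' a, f j a) atTop := by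
  let _ : MeasurableSpace α := ⊤
  simp_rw [← lintegral_count]
  exact lintegral_liminf_le fun j => .of_discrete

theorem Lp_add_le_tsum {p : ℝ} (hp : 1 ≤ p) (f g : α → ℝ≥0∞) :
    (∑' a, (f a + g a) ^ p) ^ (1 / p) ≤
      (∑' a, f a ^ p) ^ (1 / p) + (∑' a, g a ^ p) ^ (1 / p) := by
  let _ : MeasurableSpace α := ⊤
  simp_rw [← lintegral_count]
  exact lintegral_Lp_add_le Measurable.of_discrete.aemeasurable
    Measurable.of_discrete.aemeasurable hp

theorem liminf_rpow {ι : Type*} {l : Filter ι} [l.NeBot] (u : ι → ℝ≥0∞) {q : ℝ}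
    (hq : 0 ≤ q) :
    liminf u l ^ q = liminf (fun j => u j ^ q) l :=
  (monotone_rpow_of_nonneg hq).map_liminf_of_continuousAt u continuous_rpow_const.continuousAt

end ENNReal

section eNorm

variable (m : ℕ → ℕ → ℂ) {p : ℝ}

noncomputable def absMulVec (x : ℕ → ℂ) (n : ℕ) : ℝ≥0∞ :=
  ∑' k, (‖m n k‖₊ : ℝ≥0∞) * ‖x k‖₊

theorem eNorm_eq_absMulVec (x : ℕ → ℂ) :
    eNorm m p x = (∑' n, absMulVec m x n ^ p) ^ (1 / p) := rfl

theorem nnnorm_mul_nnnorm_le_eNorm (hp : 0 < p) (x : ℕ → ℂ) (n k : ℕ) :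
    (‖m n k‖₊ : ℝ≥0∞) * ‖x k‖₊ ≤ eNorm m p x :=
  calc (‖m n k‖₊ : ℝ≥0∞) * ‖x k‖₊ ≤ absMulVec m x n := ENNReal.le_tsum k
    _ = (absMulVec m x n ^ p) ^ (1 / p) := by
      rw [← ENNReal.rpow_mul, mul_one_div_cancel hp.ne', ENNReal.rpow_one]
    _ ≤ eNorm m p x := by rw [eNorm_eq_absMulVec]; gcongr; exact ENNReal.le_tsum n

theorem eNorm_neg (x : ℕ → ℂ) : eNorm m p (-x) = eNorm m p x := by
  simp only [eNorm, Pi.neg_apply, nnnorm_neg]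

theorem absMulVec_add_le (x y : ℕ → ℂ) (n : ℕ) :
    absMulVec m (x + y) n ≤ absMulVec m x n + absMulVec m y n := by
  rw [absMulVec, absMulVec, absMulVec, ← ENNReal.tsum_add]
  gcongr with k
  rw [← mul_add, Pi.add_apply]
  gcongr
  exact_mod_cast nnnorm_add_le (x k) (y k)

theorem eNorm_add_le (hp : 1 ≤ p) (x y : ℕ → ℂ) :
    eNorm m p (x + y) ≤ eNorm m p x + eNorm m p y := by
  have hp0 : 0 < p := zero_lt_one.trans_le hp
  calc eNorm m p (x + y) ≤ (∑' n, (absMulVec m x n + absMulVec m y n) ^ p) ^ (1 / p) := by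
        rw [eNorm_eq_absMulVec]
        gcongr with n
        exact absMulVec_add_le m x y n
    _ ≤ eNorm m p x + eNorm m p y := ENNReal.Lp_add_le_tsum hp _ _

theorem eNorm_sub_le (hp : 1 ≤ p) (x y : ℕ → ℂ) :
    eNorm m p (x - y) ≤ eNorm m p x + eNorm m p y := by
  simpa only [sub_eq_add_neg, eNorm_neg] using eNorm_add_le m hp x (-y)

section Fatou

variable {z : ℕ → ℕ → ℂ} {w : ℕ → ℂ} (h : ∀ k, Tendsto (fun j => z j k) atTop (𝓝 (w k)))
include h

theorem absMulVec_le_liminf_of_tendsto (n : ℕ) :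
    absMulVec m w n ≤ liminf (fun j => absMulVec m (z j) n) atTop :=
  calc absMulVec m w n
      = ∑' k, liminf (fun j => (‖m n k‖₊ : ℝ≥0∞) * ‖z j k‖₊) atTop := tsum_congr fun k =>
        (ENNReal.Tendsto.const_mul (h k).enorm (.inr ENNReal.coe_ne_top)).liminf_eq.symm
    _ ≤ _ := ENNReal.tsum_liminf_le_liminf_tsum _

theorem eNorm_le_liminf_of_tendsto (hp : 0 < p) :
    eNorm m p w ≤ liminf (fun j => eNorm m p (z j)) atTop := by
  simp only [eNorm_eq_absMulVec]
  calc (∑' n, absMulVec m w n ^ p) ^ (1 / p)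
      ≤ (∑' n, liminf (fun j => absMulVec m (z j) n ^ p) atTop) ^ (1 / p) := by
        gcongr with n
        rw [← ENNReal.liminf_rpow _ hp.le]
        gcongr
        exact absMulVec_le_liminf_of_tendsto m h n
    _ ≤ (liminf (fun j => ∑' n, absMulVec m (z j) n ^ p) atTop) ^ (1 / p) := by
        gcongr
        exact ENNReal.tsum_liminf_le_liminf_tsum _
    _ = _ := ENNReal.liminf_rpow _ (by positivity)

end Fatou

theorem cauchySeq_apply_of_eNorm (hp : 0 < p) {x : ℕ → ℕ → ℂ} {n k : ℕ} (hmk : m n k ≠ 0)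
    (hcauchy : ∀ ε : ℝ≥0∞, 0 < ε → ∃ N : ℕ, ∀ i j, N ≤ i → N ≤ j →
      eNorm m p (x i - x j) < ε) :
    CauchySeq fun i => x i k := by
  have hc : (‖m n k‖₊ : ℝ≥0∞) ≠ 0 := by simpa using hmk
  rw [EMetric.cauchySeq_iff]
  intro ε hε
  obtain ⟨N, hN⟩ := hcauchy (‖m n k‖₊ * ε) (ENNReal.mul_pos hc hε.ne')
  refine ⟨N, fun i hi j hj => ?_⟩
  rw [edist_eq_enorm_sub, ← ENNReal.mul_lt_mul_iff_right hc ENNReal.coe_ne_top]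
  exact (nnnorm_mul_nnnorm_le_eNorm m hp _ n k).trans_lt (hN i j hi hj)

end eNorm

/-- `(ℓ^p_M, ‖·‖_{M,p})` is complete: every Cauchy sequence in `ℓ^p_M` converges
to an element of `ℓ^p_M` in the norm `‖·‖_{M,p}`. -/
theorem stmt1 (m : ℕ → ℕ → ℂ) (p : ℝ) (hp : 1 ≤ p)
    (hcol : ∀ k : ℕ, ∃ n : ℕ, m n k ≠ 0)
    (x : ℕ → ℕ → ℂ) (hx : ∀ i, eNorm m p (x i) < ∞)
    (hcauchy : ∀ ε : ℝ≥0∞, 0 < ε → ∃ N : ℕ, ∀ i j, N ≤ i → N ≤ j →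
      eNorm m p (x i - x j) < ε) :
    ∃ y : ℕ → ℂ, eNorm m p y < ∞ ∧
      ∀ ε : ℝ≥0∞, 0 < ε → ∃ N : ℕ, ∀ i, N ≤ i → eNorm m p (x i - y) < ε := by
  have hp0 : 0 < p := zero_lt_one.trans_le hp
  choose y hy using fun k => cauchySeq_tendsto_of_complete
    (cauchySeq_apply_of_eNorm m hp0 (hcol k).choose_spec hcauchy)
  have hclose : ∀ ε : ℝ≥0∞, 0 < ε → ∃ N : ℕ, ∀ i, N ≤ i → eNorm m p (x i - y) ≤ ε := by
    intro ε hε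
    obtain ⟨N, hN⟩ := hcauchy ε hε
    refine ⟨N, fun i hi => ?_⟩
    calc eNorm m p (x i - y)
        ≤ liminf (fun j => eNorm m p (x i - x j)) atTop :=
          eNorm_le_liminf_of_tendsto m (fun k => (hy k).const_sub (x i k)) hp0
      _ ≤ ε := liminf_le_of_frequently_le'
          ((eventually_ge_atTop N).mono fun j hj => (hN i j hi hj).le).frequently
  obtain ⟨N₀, hN₀⟩ := hclose 1 one_pos
  refine ⟨y, ?_, fun ε hε => ?_⟩
  · calc eNorm m p y = eNorm m p (x N₀ - (x N₀ - y)) := by rw [sub_sub_cancel]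
      _ ≤ eNorm m p (x N₀) + eNorm m p (x N₀ - y) := eNorm_sub_le m hp _ _
      _ < ∞ := ENNReal.add_lt_top.2 ⟨hx N₀, (hN₀ N₀ le_rfl).trans_lt ENNReal.one_lt_top⟩
  · obtain ⟨ε', hε', hε'ε⟩ := exists_between hε
    obtain ⟨N, hN⟩ := hclose ε' hε'
    exact ⟨N, fun i hi => (hN i hi).trans_lt hε'ε⟩
end

section
/- Let M = (m_{nk}) be an infinite matrix and p ≥ 1. Then ℓ^p_M = {0} if and only if ∑_{n=1}^∞ |m_{nk}|^p = ∞ for every column index k. -/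
open scoped ENNReal NNReal

/-- `ℓ^p_M = {0}` iff every column of `M` fails to be `ℓ^p`-summable. -/
theorem stmt3 (m : ℕ → ℕ → ℂ) (p : ℝ) (hp : 1 ≤ p) :
    (∀ x : ℕ → ℂ, eNorm m p x < ∞ → x = 0) ↔
      ∀ k : ℕ, (∑' n : ℕ, (‖m n k‖₊ : ℝ≥0∞) ^ p) = ∞ := by
  have hp0 : 0 < p := lt_of_lt_of_le one_pos hp
  constructor
  · intro H k
    by_contra hk
    set x : ℕ → ℂ := Pi.single k 1 with hx
    have hinner : ∀ n : ℕ,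
        (∑' j : ℕ, (‖m n j‖₊ : ℝ≥0∞) * (‖x j‖₊ : ℝ≥0∞)) = (‖m n k‖₊ : ℝ≥0∞) := by
      intro n
      rw [tsum_eq_single k]
      · simp [hx]
      · intro j hj
        simp [hx, Pi.single_eq_of_ne hj]
    have hlt : eNorm m p x < ∞ := by
      unfold eNorm
      simp only [hinner]
      exact ENNReal.rpow_lt_top_of_nonneg (by positivity) hk
    have := H x hlt
    have : x k = 0 := by rw [this]; rfl
    simp [hx] at this
  · intro H x hlt
    by_contra hx
    obtain ⟨k, hk⟩ : ∃ k, x k ≠ 0 := by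
      by_contra h
      push_neg at h
      exact hx (funext h)
    have hxk : (‖x k‖₊ : ℝ≥0∞) ≠ 0 := by simpa using hk
    have hmono : ∀ n : ℕ, (‖m n k‖₊ : ℝ≥0∞) ^ p * (‖x k‖₊ : ℝ≥0∞) ^ p ≤
        (∑' j : ℕ, (‖m n j‖₊ : ℝ≥0∞) * (‖x j‖₊ : ℝ≥0∞)) ^ p := by
      intro n
      rw [← ENNReal.mul_rpow_of_nonneg _ _ hp0.le]
      exact ENNReal.rpow_le_rpow (ENNReal.le_tsum k) hp0.le
    have hsum : (∑' n : ℕ, (‖m n k‖₊ : ℝ≥0∞) ^ p * (‖x k‖₊ : ℝ≥0∞) ^ p) = ∞ := by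
      rw [ENNReal.tsum_mul_right, H k, ENNReal.top_mul]
      exact fun h => hxk (ENNReal.rpow_eq_zero_iff.mp h |>.elim
        (fun h => h.1) (fun h => absurd h.2 (not_lt_of_gt hp0)))
    have htop : (∑' n : ℕ, (∑' j : ℕ, (‖m n j‖₊ : ℝ≥0∞) * (‖x j‖₊ : ℝ≥0∞)) ^ p) = ∞ :=
      top_le_iff.mp (hsum ▸ ENNReal.tsum_le_tsum hmono)
    have : eNorm m p x = ∞ := by
      unfold eNorm
      rw [htop, ENNReal.top_rpow_of_pos (by positivity)]
    exact absurd (this ▸ hlt) (lt_irrefl _)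
end

section
/- Let M be a lower triangular infinite matrix (m_{nk} = 0 for k > n) with nonzero diagonal entries m_{nn} ≠ 0, and let p > 1. Then the space (ℓ^p_M, ‖·‖_{M,p}) is strictly convex: if ‖x‖_{M,p} = ‖y‖_{M,p} = 1 and ‖x+y‖_{M,p} = 2, then x = y. -/
open scoped ENNReal NNReal

/-! Write `a_n = ∑_k |m_{nk}| |x_k|` and similarly `b_n`, `c_n` for `y`, `x + y`. Then
`c ≤ a + b`, and the power-mean inequality `(a_n + b_n)^p ≤ 2^{p-1} (a_n^p + b_n^p)` gives
`2^p = ∑ c_n^p ≤ ∑ (a_n + b_n)^p ≤ 2^{p-1} (∑ a_n^p + ∑ b_n^p) = 2^p`. Hence both inequalities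
are termwise equalities; strict convexity of `t ↦ t^p` turns the second into `a = b`, and the
first gives `|x_n + y_n| = |x_n| + |y_n|` from the diagonal term. Since `M` is lower triangular
with nonzero diagonal, `a = b` forces `|x_n| = |y_n|` by induction on `n`, and strict convexity
of `ℂ` concludes. -/

open Finset

theorem NNReal.rpow_add_lt_mul_rpow_add_rpow {p : ℝ} (hp : 1 < p) {a b : ℝ≥0} (hab : a ≠ b) :
    (a + b) ^ p < 2 ^ (p - 1) * (a ^ p + b ^ p) := by
  have hconv := (strictConvexOn_rpow hp).2 a.2 b.2 (NNReal.coe_injective.ne hab)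
    (by norm_num : (0 : ℝ) < 1 / 2) (by norm_num : (0 : ℝ) < 1 / 2) (by norm_num)
  simp only [smul_eq_mul] at hconv
  rw [← NNReal.coe_lt_coe]
  push_cast
  calc ((a : ℝ) + b) ^ p = 2 ^ p * (1 / 2 * (a : ℝ) + 1 / 2 * b) ^ p := by
        rw [← Real.mul_rpow (by norm_num) (by positivity)]
        ring_nf
    _ < 2 ^ p * (1 / 2 * (a : ℝ) ^ p + 1 / 2 * (b : ℝ) ^ p) :=
        mul_lt_mul_of_pos_left hconv (by positivity)
    _ = 2 ^ (p - 1) * ((a : ℝ) ^ p + (b : ℝ) ^ p) := by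
        rw [Real.rpow_sub two_pos, Real.rpow_one]
        ring

theorem ENNReal.rpow_add_lt_mul_rpow_add_rpow {p : ℝ} (hp : 1 < p) {a b : ℝ≥0} (hab : a ≠ b) :
    ((a : ℝ≥0∞) + b) ^ p < 2 ^ (p - 1) * ((a : ℝ≥0∞) ^ p + (b : ℝ≥0∞) ^ p) := by
  have hp0 : 0 ≤ p := by linarith
  have h := ENNReal.coe_strictMono (NNReal.rpow_add_lt_mul_rpow_add_rpow hp hab)
  simpa only [ENNReal.coe_mul, ENNReal.coe_add, ENNReal.coe_rpow_of_nonneg _ hp0,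
    ENNReal.coe_rpow_of_nonneg _ (sub_nonneg.2 hp.le), ENNReal.coe_ofNat] using h

/-- Equality case of Minkowski's inequality in `ℓ^p` for two unit vectors, `1 < p`. -/
theorem eq_and_eq_add_of_tsum_rpow_eq {ι : Type*} {p : ℝ} (hp : 1 < p) {a b c : ι → ℝ≥0}
    (hc : ∀ i, c i ≤ a i + b i) (ha : ∑' i, (a i : ℝ≥0∞) ^ p = 1)
    (hb : ∑' i, (b i : ℝ≥0∞) ^ p = 1) (habc : ∑' i, (c i : ℝ≥0∞) ^ p = 2 ^ p) :
    a = b ∧ c = a + b := by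
  have hp0 : 0 < p := by linarith
  have hle_add : ∀ i, (c i : ℝ≥0∞) ^ p ≤ ((a i : ℝ≥0∞) + b i) ^ p := fun i =>
    ENNReal.rpow_le_rpow (by exact_mod_cast hc i) hp0.le
  have hle_mean : ∀ i, ((a i : ℝ≥0∞) + b i) ^ p ≤ 2 ^ (p - 1) * ((a i : ℝ≥0∞) ^ p + b i ^ p) :=
    fun i => ENNReal.rpow_add_le_mul_rpow_add_rpow _ _ hp.le
  have hmean : ∑' i, 2 ^ (p - 1) * ((a i : ℝ≥0∞) ^ p + b i ^ p) = 2 ^ p := by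
    have h2 := ENNReal.rpow_add (p - 1) 1 two_ne_zero ENNReal.ofNat_ne_top
    rw [sub_add_cancel, ENNReal.rpow_one] at h2
    rw [ENNReal.tsum_mul_left, ENNReal.tsum_add, ha, hb, one_add_one_eq_two, h2]
  have hadd : ∑' i, ((a i : ℝ≥0∞) + b i) ^ p = 2 ^ p :=
    le_antisymm (hmean ▸ ENNReal.tsum_le_tsum hle_mean) (habc ▸ ENNReal.tsum_le_tsum hle_add)
  have htop : (2 : ℝ≥0∞) ^ p ≠ ⊤ := ENNReal.rpow_ne_top_of_nonneg hp0.le ENNReal.ofNat_ne_top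
  constructor
  · funext i
    by_contra hne
    exact (ENNReal.tsum_lt_tsum (hadd ▸ htop) hle_mean
      (ENNReal.rpow_add_lt_mul_rpow_add_rpow hp hne)).ne (hadd.trans hmean.symm)
  · funext i
    by_contra hne
    have hlt : (c i : ℝ≥0∞) < a i + b i := by exact_mod_cast lt_of_le_of_ne (hc i) hne
    exact (ENNReal.tsum_lt_tsum (habc ▸ htop) hle_add
      (ENNReal.rpow_lt_rpow hlt hp0)).ne (habc.trans hadd.symm)

theorem eq_of_sum_range_succ_mul_eq {w : ℕ → ℕ → ℝ≥0} (hdiag : ∀ n, w n n ≠ 0) {u v : ℕ → ℝ≥0}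
    (h : ∀ n, ∑ k ∈ range (n + 1), w n k * u k = ∑ k ∈ range (n + 1), w n k * v k) : u = v := by
  funext n
  induction n using Nat.strong_induction_on with
  | _ n ih =>
    have hrow := h n
    rw [sum_range_succ, sum_range_succ,
      sum_congr rfl fun k hk => by rw [ih k (mem_range.1 hk)]] at hrow
    exact mul_left_cancel₀ (hdiag n) (add_left_cancel hrow)

section rowAbs

variable (m : ℕ → ℕ → ℂ)

/-- Row `n` of `|M| |z|`, cut at the diagonal, which is exact for lower triangular `M`. -/
noncomputable def rowAbs (z : ℕ → ℂ) (n : ℕ) : ℝ≥0 :=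
  ∑ k ∈ range (n + 1), ‖m n k‖₊ * ‖z k‖₊

variable {m}

theorem tsum_rpow_rowAbs (htri : ∀ n k : ℕ, n < k → m n k = 0) {p : ℝ} (hp : 0 < p)
    (z : ℕ → ℂ) : ∑' n, (rowAbs m z n : ℝ≥0∞) ^ p = eNorm m p z ^ p := by
  rw [eNorm, ← ENNReal.rpow_mul, one_div_mul_cancel hp.ne', ENNReal.rpow_one]
  congr 1
  funext n
  rw [rowAbs, tsum_eq_sum (s := range (n + 1)) fun k hk => by
    simp [htri n k (by simpa using hk)]]
  push_cast
  rfl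

theorem rowAbs_add_le (x y : ℕ → ℂ) (n : ℕ) :
    rowAbs m (x + y) n ≤ rowAbs m x n + rowAbs m y n := by
  rw [rowAbs, rowAbs, rowAbs, ← sum_add_distrib]
  gcongr with k
  rw [← mul_add]
  gcongr
  exact nnnorm_add_le (x k) (y k)

theorem nnnorm_add_eq_of_rowAbs_add_eq {x y : ℕ → ℂ} {n : ℕ} (hdiag : m n n ≠ 0)
    (h : rowAbs m (x + y) n = rowAbs m x n + rowAbs m y n) :
    ‖x n + y n‖₊ = ‖x n‖₊ + ‖y n‖₊ := by
  rw [rowAbs, rowAbs, rowAbs, ← sum_add_distrib] at h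
  have hle : ∀ k ∈ range (n + 1),
      ‖m n k‖₊ * ‖(x + y) k‖₊ ≤ ‖m n k‖₊ * ‖x k‖₊ + ‖m n k‖₊ * ‖y k‖₊ := fun k _ => by
    rw [← mul_add]
    gcongr
    exact nnnorm_add_le (x k) (y k)
  have hdiag_eq := (sum_eq_sum_iff_of_le hle).1 h n (self_mem_range_succ n)
  rw [← mul_add] at hdiag_eq
  exact mul_left_cancel₀ (nnnorm_ne_zero_iff.2 hdiag) hdiag_eq

end rowAbs

/-- If `M` is lower triangular with nonzero diagonal and `p > 1`, then
`(ℓ^p_M, ‖·‖_{M,p})` is strictly convex. -/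
theorem stmt6 (m : ℕ → ℕ → ℂ) (p : ℝ) (hp : 1 < p)
    (htri : ∀ n k : ℕ, n < k → m n k = 0)
    (hdiag : ∀ n : ℕ, m n n ≠ 0)
    (x y : ℕ → ℂ) (hx : eNorm m p x = 1) (hy : eNorm m p y = 1)
    (hxy : eNorm m p (x + y) = 2) :
    x = y := by
  have hsum := tsum_rpow_rowAbs htri (by linarith : (0 : ℝ) < p)
  obtain ⟨hrow, hrow_add⟩ := eq_and_eq_add_of_tsum_rpow_eq hp (rowAbs_add_le x y)
    (by rw [hsum, hx, ENNReal.one_rpow]) (by rw [hsum, hy, ENNReal.one_rpow]) (by rw [hsum, hxy])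
  have hnorm : (‖x ·‖₊) = (‖y ·‖₊) :=
    eq_of_sum_range_succ_mul_eq (w := fun n k => ‖m n k‖₊)
      (fun n => nnnorm_ne_zero_iff.2 (hdiag n)) (congrFun hrow)
  funext n
  have hnorm_n : ‖x n‖ = ‖y n‖ := congrArg NNReal.toReal (congrFun hnorm n)
  refine eq_of_norm_eq_of_norm_add_eq hnorm_n ?_
  exact congrArg NNReal.toReal (nnnorm_add_eq_of_rowAbs_add_eq (hdiag n) (congrFun hrow_add n))
end

section
/- Factorization ℓ^p = d_M(p)·g_M(p): let 1 ≤ p < ∞ and let (a_n) be a sequence of positive reals with partial sums A_n = ∑_{j≤n} a_j. Define d(p) = {y : ∑_n a_n sup_{k≥n} |y_k|^p < ∞} with norm ‖y‖_{d(p)} = (∑_n a_n sup_{k≥n}|y_k|^p)^{1/p}, and g(p) = {z : sup_n A_n^{-1} ∑_{k≤n} |z_k|^p < ∞} with norm ‖z‖_{g(p)} = sup_n (A_n^{-1} ∑_{k≤n}|z_k|^p)^{1/p}. Then a sequence x lies in ℓ^p if and only if x = y·z (coordinatewise product) for some y ∈ d(p) and z ∈ g(p), and moreover ‖x‖_p =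 inf{ ‖y‖_{d(p)} ‖z‖_{g(p)} : x = y·z }. -/
/-!
Write `X n = ‖x n‖^p` and `α n = a n`. If `x = y·z`, then `‖x n‖^p ≤ U n ‖z n‖^p` with
`U n = sup_{k ≥ n} ‖y k‖^p` decreasing, and Abel summation against the partial sums of
`‖z‖^p`, which are at most `‖z‖_{g(p)}^p` times those of `α`, gives
`‖x‖_p ≤ ‖y‖_{d(p)} ‖z‖_{g(p)}`.

Conversely, let `L` be the level function of `X` with respect to `α`: cut `ℕ` greedily into
blocks, a block starting at `i` ending where the largest average `∑ X / ∑ α` over intervals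
`[i, m)` is first attained, and let `L` be that largest average on the block. Then `L` is
decreasing, `∑ α L ≤ ∑ X` since on completed blocks the averages are attained, and
`∑_{k<n} X k / L k ≤ ∑_{k<n} α k` since no interval beats the maximal average. Hence
`‖y n‖^p = L n` and `z = x / y` give `‖y‖_{d(p)} ≤ ‖x‖_p` and `‖z‖_{g(p)} ≤ 1`.
-/

open scoped ENNReal NNReal

noncomputable def dNorm (a : ℕ → ℝ) (p : ℝ) (y : ℕ → ℂ) : ℝ≥0∞ :=
  (∑' n : ℕ, ENNReal.ofReal (a n) *
      (⨆ k : ℕ, ⨆ _ : n ≤ k, (‖y k‖₊ : ℝ≥0∞) ^ p)) ^ (1 / p)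

noncomputable def gNorm (a : ℕ → ℝ) (p : ℝ) (z : ℕ → ℂ) : ℝ≥0∞ :=
  ⨆ n : ℕ, ((∑ j ∈ Finset.range (n + 1), ENNReal.ofReal (a j))⁻¹ *
      ∑ k ∈ Finset.range (n + 1), (‖z k‖₊ : ℝ≥0∞) ^ p) ^ (1 / p)

noncomputable def lpNorm (p : ℝ) (x : ℕ → ℂ) : ℝ≥0∞ :=
  (∑' n : ℕ, (‖x n‖₊ : ℝ≥0∞) ^ p) ^ (1 / p)

open Finset

theorem biSup_gt_le_of_lt {α : Type*} [CompleteLinearOrder α] {f : ℕ → α} {i n : ℕ} {B : α}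
    (h : ∀ m ∈ Ioc i n, f m < ⨆ m, ⨆ _ : i < m, f m) (hB : ∀ m, n < m → f m ≤ B) :
    ⨆ m, ⨆ _ : i < m, f m ≤ B := by
  by_contra! hlt
  have hfin : (Ioc i n).sup f < ⨆ m, ⨆ _ : i < m, f m :=
    (Finset.sup_lt_iff (bot_le.trans_lt hlt)).2 h
  have hsplit : ⨆ m, ⨆ _ : i < m, f m ≤ (Ioc i n).sup f ⊔ B := by
    refine iSup₂_le fun m hm => ?_
    rcases le_or_gt m n with hmn | hnm
    · exact le_sup_of_le_left (Finset.le_sup (mem_Ioc.2 ⟨hm, hmn⟩))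
    · exact le_sup_of_le_right (hB m hnm)
  exact (hsplit.trans_lt (max_lt hfin hlt)).false

theorem sum_range_mul_by_parts {R : Type*} [CommSemiring R]
    {U d Z : ℕ → R} (hU : ∀ n, U n = d n + U (n + 1)) (N : ℕ) :
    ∑ n ∈ range N, U n * Z n =
      ∑ k ∈ range N, d k * ∑ j ∈ range (k + 1), Z j + U N * ∑ j ∈ range N, Z j := by
  induction N with
  | zero => simp
  | succ N ih =>
    rw [sum_range_succ, ih, sum_range_succ, sum_range_succ Z N, hU N]
    ring

theorem ENNReal.sum_range_mul_le_of_antitone {U Z a : ℕ → ℝ≥0∞} {G : ℝ≥0∞} (hU : Antitone U)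
    (hZ : ∀ N, ∑ n ∈ range N, Z n ≤ G * ∑ n ∈ range N, a n) (N : ℕ) :
    ∑ n ∈ range N, U n * Z n ≤ G * ∑ n ∈ range N, a n * U n := by
  have hdec : ∀ n, U n = (U n - U (n + 1)) + U (n + 1) := fun n =>
    (tsub_add_cancel_of_le (hU n.le_succ)).symm
  simp_rw [mul_comm (a _) (U _), sum_range_mul_by_parts hdec]
  calc _ ≤ ∑ k ∈ range N, (U k - U (k + 1)) * (G * ∑ j ∈ range (k + 1), a j)
        + U N * (G * ∑ j ∈ range N, a j) := by gcongr with k <;> exact hZ _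
    _ = _ := by simp only [mul_add, Finset.mul_sum, mul_left_comm G]

theorem ENNReal.tsum_mul_le_of_antitone {U Z a : ℕ → ℝ≥0∞} {G : ℝ≥0∞} (hU : Antitone U)
    (hZ : ∀ N, ∑ n ∈ range N, Z n ≤ G * ∑ n ∈ range N, a n) :
    ∑' n, U n * Z n ≤ G * ∑' n, a n * U n := by
  rw [ENNReal.tsum_eq_iSup_nat]
  exact iSup_le fun N => (ENNReal.sum_range_mul_le_of_antitone hU hZ N).trans
    (by gcongr; exact ENNReal.sum_le_tsum _)

namespace LevelFunction

variable (X α : ℕ → ℝ≥0∞)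

noncomputable def maxAvg (i : ℕ) : ℝ≥0∞ :=
  ⨆ m, ⨆ _ : i < m, (∑ k ∈ Ico i m, X k) / ∑ k ∈ Ico i m, α k

open Classical in
noncomputable def blockStart : ℕ → ℕ
  | 0 => 0
  | n + 1 =>
    if ∑ k ∈ Ico (blockStart n) (n + 1), X k =
        maxAvg X α (blockStart n) * ∑ k ∈ Ico (blockStart n) (n + 1), α k
    then n + 1 else blockStart n

noncomputable def level (n : ℕ) : ℝ≥0∞ := maxAvg X α (blockStart X α n)

variable {X α}

theorem sum_Ico_ne_zero (hα0 : ∀ n, α n ≠ 0) {i m : ℕ} (h : i < m) :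
    ∑ k ∈ Ico i m, α k ≠ 0 := fun h0 =>
  hα0 i (sum_eq_zero_iff.1 h0 i (mem_Ico.2 ⟨le_rfl, h⟩))

theorem sum_Ico_le_maxAvg_mul (hα0 : ∀ n, α n ≠ 0) (hα : ∀ n, α n ≠ ∞) {i m : ℕ} (h : i ≤ m) :
    ∑ k ∈ Ico i m, X k ≤ maxAvg X α i * ∑ k ∈ Ico i m, α k := by
  rcases h.eq_or_lt with rfl | h
  · simp
  refine (ENNReal.div_le_iff (sum_Ico_ne_zero hα0 h) (ENNReal.sum_ne_top.2 fun k _ => hα k)).1 ?_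
  exact le_iSup₂ (f := fun m (_ : i < m) => (∑ k ∈ Ico i m, X k) / ∑ k ∈ Ico i m, α k) m h

theorem maxAvg_le_tsum_div (i : ℕ) : maxAvg X α i ≤ (∑' k, X k) / α i :=
  iSup₂_le fun _ hm => ENNReal.div_le_div (ENNReal.sum_le_tsum _)
    (single_le_sum (fun _ _ => zero_le) (mem_Ico.2 ⟨le_rfl, hm⟩))

theorem maxAvg_le_of_attained (hX : ∀ n, X n ≠ ∞) (hα0 : ∀ n, α n ≠ 0) (hα : ∀ n, α n ≠ ∞)
    {i m : ℕ} (him : i < m)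
    (hatt : ∑ k ∈ Ico i m, X k = maxAvg X α i * ∑ k ∈ Ico i m, α k) :
    maxAvg X α m ≤ maxAvg X α i := by
  refine iSup₂_le fun m' hm' => ENNReal.div_le_of_le_mul ?_
  have hle := sum_Ico_le_maxAvg_mul (X := X) hα0 hα (him.trans hm').le
  rw [← sum_Ico_consecutive _ him.le hm'.le, ← sum_Ico_consecutive α him.le hm'.le, mul_add,
    ← hatt] at hle
  exact (ENNReal.add_le_add_iff_left (ENNReal.sum_ne_top.2 fun k _ => hX k)).1 hle

theorem blockStart_succ (n : ℕ) :
    blockStart X α (n + 1) = blockStart X α n ∨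
      blockStart X α (n + 1) = n + 1 ∧
        ∑ k ∈ Ico (blockStart X α n) (n + 1), X k =
          maxAvg X α (blockStart X α n) * ∑ k ∈ Ico (blockStart X α n) (n + 1), α k := by
  rw [blockStart]
  split_ifs with h
  exacts [Or.inr ⟨rfl, h⟩, Or.inl rfl]

theorem blockStart_spec (n : ℕ) :
    blockStart X α n ≤ n ∧ ∀ m, blockStart X α n < m → m ≤ n →
      ∑ k ∈ Ico (blockStart X α n) m, X k ≠
        maxAvg X α (blockStart X α n) * ∑ k ∈ Ico (blockStart X α n) m, α k := by
  induction n with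
  | zero => exact ⟨le_rfl, fun m h h' => by omega⟩
  | succ n ih =>
    rw [blockStart]
    split_ifs with h
    · exact ⟨le_rfl, fun m h1 h2 => by omega⟩
    · refine ⟨ih.1.trans n.le_succ, fun m h1 h2 => ?_⟩
      rcases h2.lt_or_eq with h2 | rfl
      · exact ih.2 m h1 (Nat.lt_succ_iff.1 h2)
      · exact h

theorem blockStart_le (n : ℕ) : blockStart X α n ≤ n := (blockStart_spec n).1

theorem level_antitone (hX : ∀ n, X n ≠ ∞) (hα0 : ∀ n, α n ≠ 0) (hα : ∀ n, α n ≠ ∞) :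
    Antitone (level X α) := by
  refine antitone_nat_of_succ_le fun n => ?_
  rcases blockStart_succ (X := X) (α := α) n with h | ⟨h, hatt⟩
  · rw [level, level, h]
  · rw [level, level, h]
    exact maxAvg_le_of_attained hX hα0 hα (Nat.lt_succ_of_le (blockStart_le n)) hatt

theorem level_ne_top (hα0 : ∀ n, α n ≠ 0) (hT : ∑' k, X k ≠ ∞) (n : ℕ) : level X α n ≠ ∞ :=
  ((maxAvg_le_tsum_div _).trans_lt (ENNReal.div_lt_top hT (hα0 _))).ne

theorem eq_zero_of_level_eq_zero (hα0 : ∀ n, α n ≠ 0) (hα : ∀ n, α n ≠ ∞) {n : ℕ}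
    (h : level X α n = 0) : X n = 0 := by
  have hst := blockStart_le (X := X) (α := α) n
  have hle := sum_Ico_le_maxAvg_mul (X := X) hα0 hα (hst.trans n.le_succ)
  rw [← level, h, zero_mul] at hle
  exact nonpos_iff_eq_zero.1 <| (single_le_sum (fun _ _ => zero_le)
    (mem_Ico.2 ⟨hst, n.lt_succ_self⟩)).trans hle

theorem sum_range_le_of_blocks (F : ℕ → ℕ → ℝ≥0∞) (G : ℕ → ℝ≥0∞)
    (hF : ∀ i m, i < m → ∑ k ∈ Ico i m, X k = maxAvg X α i * ∑ k ∈ Ico i m, α k →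
      ∑ k ∈ Ico i m, F i k ≤ ∑ k ∈ Ico i m, G k) (n : ℕ) :
    ∑ k ∈ range n, F (blockStart X α k) k ≤
      ∑ k ∈ range (blockStart X α n), G k +
        ∑ k ∈ Ico (blockStart X α n) n, F (blockStart X α n) k := by
  induction n with
  | zero => simp [blockStart]
  | succ n ih =>
    have hst := blockStart_le (X := X) (α := α) n
    rw [sum_range_succ]
    rcases blockStart_succ (X := X) (α := α) n with h | ⟨h, hatt⟩
    · rw [h, sum_Ico_succ_top hst, ← add_assoc]
      exact add_le_add ih le_rfl
    · calc _ ≤ ∑ k ∈ range (blockStart X α n), G k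
              + ∑ k ∈ Ico (blockStart X α n) n, F (blockStart X α n) k
              + F (blockStart X α n) n := add_le_add ih le_rfl
        _ = ∑ k ∈ range (blockStart X α n), G k
              + ∑ k ∈ Ico (blockStart X α n) (n + 1), F (blockStart X α n) k := by
          rw [sum_Ico_succ_top hst, add_assoc]
        _ ≤ ∑ k ∈ range (blockStart X α n), G k + ∑ k ∈ Ico (blockStart X α n) (n + 1), G k :=
          add_le_add le_rfl (hF _ _ (Nat.lt_succ_of_le hst) hatt)
        _ = _ := by
          rw [h, sum_range_add_sum_Ico _ (hst.trans n.le_succ), Ico_self, sum_empty, add_zero]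

theorem sum_div_level_le (hα0 : ∀ n, α n ≠ 0) (hα : ∀ n, α n ≠ ∞) (n : ℕ) :
    ∑ k ∈ range n, X k / level X α k ≤ ∑ k ∈ range n, α k := by
  have hblock : ∀ i m, i ≤ m → ∑ k ∈ Ico i m, X k / maxAvg X α i ≤ ∑ k ∈ Ico i m, α k :=
    fun i m h => by
      simp_rw [div_eq_mul_inv, ← sum_mul, ← div_eq_mul_inv]
      exact ENNReal.div_le_of_le_mul' (sum_Ico_le_maxAvg_mul hα0 hα h)
  calc _ ≤ ∑ k ∈ range (blockStart X α n), α k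
          + ∑ k ∈ Ico (blockStart X α n) n, X k / maxAvg X α (blockStart X α n) :=
        sum_range_le_of_blocks (fun i k => X k / maxAvg X α i) α
          (fun i m h _ => hblock i m h.le) n
    _ ≤ ∑ k ∈ range (blockStart X α n), α k + ∑ k ∈ Ico (blockStart X α n) n, α k :=
        add_le_add le_rfl (hblock _ _ (blockStart_le n))
    _ = _ := sum_range_add_sum_Ico _ (blockStart_le n)

/-- The maximal average of an unfinished block is not attained on it, so it is approached by
averages over longer intervals, whose sums are bounded by the tail of `X`. -/
theorem sum_range_add_maxAvg_mul_le (hα0 : ∀ n, α n ≠ 0) (hα : ∀ n, α n ≠ ∞) {i n : ℕ}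
    (hin : i ≤ n) (h : ∀ m, i < m → m ≤ n →
      ∑ k ∈ Ico i m, X k ≠ maxAvg X α i * ∑ k ∈ Ico i m, α k) :
    ∑ k ∈ range i, X k + maxAvg X α i * ∑ k ∈ Ico i n, α k ≤ ∑' k, X k := by
  rcases hin.eq_or_lt with rfl | hin
  · simpa using ENNReal.sum_le_tsum _
  rcases eq_or_ne (∑' k, X k) ∞ with hT | hT
  · exact hT ▸ le_top
  have hβ0 := sum_Ico_ne_zero hα0 hin
  have hβ : ∑ k ∈ Ico i n, α k ≠ ∞ := ENNReal.sum_ne_top.2 fun k _ => hα k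
  have hc : maxAvg X α i ≤ (∑' k, X k - ∑ k ∈ range i, X k) / ∑ k ∈ Ico i n, α k := by
    refine biSup_gt_le_of_lt (n := n) (fun m hm => ?_) (fun m hm => ?_)
    · obtain ⟨him, hmn⟩ := mem_Ioc.1 hm
      refine (ENNReal.div_lt_iff (Or.inl (sum_Ico_ne_zero hα0 him))
        (Or.inl (ENNReal.sum_ne_top.2 fun k _ => hα k))).2 ?_
      exact lt_of_le_of_ne (sum_Ico_le_maxAvg_mul hα0 hα him.le) (h m him hmn)
    · refine ENNReal.div_le_div (ENNReal.le_sub_of_add_le_left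
        (ne_top_of_le_ne_top hT (ENNReal.sum_le_tsum _)) ?_)
        (sum_le_sum_of_subset (Ico_subset_Ico_right hm.le))
      rw [sum_range_add_sum_Ico _ (hin.trans hm).le]
      exact ENNReal.sum_le_tsum _
  calc _ ≤ ∑ k ∈ range i, X k + (∑' k, X k - ∑ k ∈ range i, X k) := by
        refine add_le_add le_rfl ?_
        exact (ENNReal.le_div_iff_mul_le (Or.inl hβ0) (Or.inl hβ)).1 hc
    _ = ∑' k, X k := add_tsub_cancel_of_le (ENNReal.sum_le_tsum _)

theorem tsum_mul_level_le (hα0 : ∀ n, α n ≠ 0) (hα : ∀ n, α n ≠ ∞) :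
    ∑' n, α n * level X α n ≤ ∑' n, X n := by
  rw [ENNReal.tsum_eq_iSup_nat]
  refine iSup_le fun n => ?_
  obtain ⟨hle, hopen⟩ := blockStart_spec (X := X) (α := α) n
  calc _ ≤ ∑ k ∈ range (blockStart X α n), X k
          + ∑ k ∈ Ico (blockStart X α n) n, α k * maxAvg X α (blockStart X α n) :=
        sum_range_le_of_blocks (fun i k => α k * maxAvg X α i) X
          (fun i m _ hatt => by rw [← sum_mul, mul_comm, hatt]) n
    _ = ∑ k ∈ range (blockStart X α n), X k
          + maxAvg X α (blockStart X α n) * ∑ k ∈ Ico (blockStart X α n) n, α k := by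
        rw [← sum_mul, mul_comm]
    _ ≤ _ := sum_range_add_maxAvg_mul_le hα0 hα hle hopen

end LevelFunction

theorem ENNReal.rpow_one_div_rpow {p : ℝ} (hp : p ≠ 0) (t : ℝ≥0∞) : (t ^ (1 / p)) ^ p = t := by
  rw [one_div, ENNReal.rpow_inv_rpow hp]

theorem sum_range_ofReal_ne_zero {a : ℕ → ℝ} (ha : ∀ n, 0 < a n) (n : ℕ) :
    ∑ k ∈ range (n + 1), ENNReal.ofReal (a k) ≠ 0 := fun h =>
  (ENNReal.ofReal_pos.2 (ha 0)).ne' (sum_eq_zero_iff.1 h 0 (mem_range.2 n.succ_pos))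

theorem sum_range_le_gNorm_rpow_mul {a : ℕ → ℝ} (ha : ∀ n, 0 < a n) {p : ℝ} (hp : 0 < p)
    (z : ℕ → ℂ) (N : ℕ) :
    ∑ k ∈ range N, (‖z k‖₊ : ℝ≥0∞) ^ p ≤
      gNorm a p z ^ p * ∑ k ∈ range N, ENNReal.ofReal (a k) := by
  cases N with
  | zero => simp
  | succ n =>
    have hA : ∑ k ∈ range (n + 1), ENNReal.ofReal (a k) ≠ ∞ :=
      ENNReal.sum_ne_top.2 fun _ _ => ENNReal.ofReal_ne_top
    have hle := ENNReal.rpow_le_rpow (le_iSup (fun n => ((∑ j ∈ range (n + 1),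
      ENNReal.ofReal (a j))⁻¹ * ∑ k ∈ range (n + 1), (‖z k‖₊ : ℝ≥0∞) ^ p) ^ (1 / p)) n) hp.le
    rw [ENNReal.rpow_one_div_rpow hp.ne', ← gNorm,
      ENNReal.inv_mul_le_iff (sum_range_ofReal_ne_zero ha n) hA] at hle
    rwa [mul_comm]

theorem lpNorm_le_dNorm_mul_gNorm {p : ℝ} (hp : 0 < p) {a : ℕ → ℝ} (ha : ∀ n, 0 < a n)
    {x y z : ℕ → ℂ} (hxyz : ∀ n, x n = y n * z n) :
    lpNorm p x ≤ dNorm a p y * gNorm a p z := by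
  set U : ℕ → ℝ≥0∞ := fun n => ⨆ k, ⨆ _ : n ≤ k, (‖y k‖₊ : ℝ≥0∞) ^ p
  have hU : Antitone U := fun m n hmn =>
    iSup₂_le fun k hk =>
      le_iSup₂ (f := fun k (_ : m ≤ k) => (‖y k‖₊ : ℝ≥0∞) ^ p) k (hmn.trans hk)
  have hterm : ∀ n, (‖x n‖₊ : ℝ≥0∞) ^ p ≤ U n * (‖z n‖₊ : ℝ≥0∞) ^ p := fun n => by
    rw [hxyz n, nnnorm_mul, ENNReal.coe_mul, ENNReal.mul_rpow_of_nonneg _ _ hp.le]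
    exact mul_le_mul_left (le_iSup₂ (f := fun k (_ : n ≤ k) => (‖y k‖₊ : ℝ≥0∞) ^ p) n le_rfl) _
  have hsum : ∑' n, (‖x n‖₊ : ℝ≥0∞) ^ p ≤ (dNorm a p y * gNorm a p z) ^ p := by
    rw [ENNReal.mul_rpow_of_nonneg _ _ hp.le, dNorm, ENNReal.rpow_one_div_rpow hp.ne', mul_comm]
    exact (ENNReal.tsum_le_tsum hterm).trans (ENNReal.tsum_mul_le_of_antitone hU
      (sum_range_le_gNorm_rpow_mul ha hp z))
  calc lpNorm p x ≤ ((dNorm a p y * gNorm a p z) ^ p) ^ (1 / p) :=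
        ENNReal.rpow_le_rpow hsum (by positivity)
    _ = _ := by rw [one_div, ENNReal.rpow_rpow_inv hp.ne']

theorem dNorm_eq_of_antitone {a : ℕ → ℝ} {p : ℝ} {y : ℕ → ℂ}
    (hy : Antitone fun n => (‖y n‖₊ : ℝ≥0∞) ^ p) :
    dNorm a p y = (∑' n, ENNReal.ofReal (a n) * (‖y n‖₊ : ℝ≥0∞) ^ p) ^ (1 / p) := by
  have hsup : ∀ n, ⨆ k, ⨆ _ : n ≤ k, (‖y k‖₊ : ℝ≥0∞) ^ p = (‖y n‖₊ : ℝ≥0∞) ^ p := fun n =>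
    le_antisymm (iSup₂_le fun _ hk => hy hk)
      (le_iSup₂ (f := fun k (_ : n ≤ k) => (‖y k‖₊ : ℝ≥0∞) ^ p) n le_rfl)
  simp only [dNorm, hsup]

theorem gNorm_le_one {a : ℕ → ℝ} (ha : ∀ n, 0 < a n) {p : ℝ} (hp : 0 < p) {z : ℕ → ℂ}
    (hz : ∀ n, ∑ k ∈ range n, (‖z k‖₊ : ℝ≥0∞) ^ p ≤ ∑ k ∈ range n, ENNReal.ofReal (a k)) :
    gNorm a p z ≤ 1 := by
  refine iSup_le fun n => ENNReal.rpow_le_one ?_ (by positivity)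
  rw [ENNReal.inv_mul_le_iff (sum_range_ofReal_ne_zero ha n)
    (ENNReal.sum_ne_top.2 fun _ _ => ENNReal.ofReal_ne_top), mul_one]
  exact hz (n + 1)

theorem ENNReal.coe_nnnorm_ofReal_toReal {t : ℝ≥0∞} (ht : t ≠ ∞) :
    (‖((t.toReal : ℝ) : ℂ)‖₊ : ℝ≥0∞) = t := by
  rw [Complex.nnnorm_real, ← enorm_eq_nnnorm, Real.enorm_eq_ofReal ENNReal.toReal_nonneg,
    ENNReal.ofReal_toReal ht]

open LevelFunction in
theorem exists_factorization_of_lpNorm_ne_top {p : ℝ} (hp : 0 < p) {a : ℕ → ℝ}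
    (ha : ∀ n, 0 < a n) {x : ℕ → ℂ} (hx : lpNorm p x ≠ ∞) :
    ∃ y z : ℕ → ℂ, dNorm a p y ≤ lpNorm p x ∧ gNorm a p z ≤ 1 ∧ ∀ n, x n = y n * z n := by
  set X : ℕ → ℝ≥0∞ := fun n => (‖x n‖₊ : ℝ≥0∞) ^ p
  set α : ℕ → ℝ≥0∞ := fun n => ENNReal.ofReal (a n)
  have hα0 : ∀ n, α n ≠ 0 := fun n => (ENNReal.ofReal_pos.2 (ha n)).ne'
  have hα : ∀ n, α n ≠ ∞ := fun _ => ENNReal.ofReal_ne_top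
  have hX : ∀ n, X n ≠ ∞ := fun _ => ENNReal.rpow_ne_top_of_nonneg hp.le ENNReal.coe_ne_top
  have hT : ∑' n, X n ≠ ∞ := by
    rw [← ENNReal.rpow_one_div_rpow hp.ne' (∑' n, X n)]
    exact ENNReal.rpow_ne_top_of_nonneg hp.le hx
  set L := level X α
  have hL : ∀ n, L n ≠ ∞ := level_ne_top hα0 hT
  set y : ℕ → ℂ := fun n => ((L n ^ (1 / p)).toReal : ℂ)
  have hy : ∀ n, (‖y n‖₊ : ℝ≥0∞) ^ p = L n := fun n => by
    rw [ENNReal.coe_nnnorm_ofReal_toReal (ENNReal.rpow_ne_top_of_nonneg (by positivity) (hL n)),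
      ENNReal.rpow_one_div_rpow hp.ne']
  have hx0 : ∀ n, y n = 0 → x n = 0 := fun n h => by
    have hL0 : L n = 0 := by
      rw [← hy n, h, nnnorm_zero, ENNReal.coe_zero, ENNReal.zero_rpow_of_pos hp]
    have hXn : X n = 0 := eq_zero_of_level_eq_zero hα0 hα hL0
    simpa [X, ENNReal.rpow_eq_zero_iff, hp, hp.not_gt] using hXn
  have hz : ∀ n, (‖x n / y n‖₊ : ℝ≥0∞) ^ p ≤ X n / L n := fun n => by
    by_cases h : y n = 0
    · simp [h, ENNReal.zero_rpow_of_pos hp]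
    · rw [nnnorm_div, ENNReal.coe_div (nnnorm_ne_zero_iff.2 h),
        ENNReal.div_rpow_of_nonneg _ _ hp.le, hy n]
  refine ⟨y, fun n => x n / y n, ?_, ?_, fun n => ?_⟩
  · rw [dNorm_eq_of_antitone (by simpa only [hy] using level_antitone hX hα0 hα)]
    simp only [hy]
    exact ENNReal.rpow_le_rpow (tsum_mul_level_le hα0 hα) (by positivity)
  · exact gNorm_le_one ha hp fun n =>
      (sum_le_sum fun k _ => hz k).trans (sum_div_level_le hα0 hα n)
  · by_cases h : y n = 0
    · rw [h, zero_mul, hx0 n h]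
    · rw [mul_div_cancel₀ _ h]

/-- Bennett's factorization `ℓ^p = d(p)·g(p)`: `x ∈ ℓ^p` iff `x = y·z` with
`y ∈ d(p)`, `z ∈ g(p)`, and `‖x‖_p = inf{‖y‖_{d(p)}‖z‖_{g(p)} : x = y·z}`. -/
theorem stmt13 (p : ℝ) (hp : 1 ≤ p) (a : ℕ → ℝ) (ha : ∀ n, 0 < a n) (x : ℕ → ℂ) :
    (lpNorm p x < ∞ ↔
      ∃ y z : ℕ → ℂ, dNorm a p y < ∞ ∧ gNorm a p z < ∞ ∧ ∀ n, x n = y n * z n) ∧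
    lpNorm p x =
      ⨅ (y : ℕ → ℂ) (z : ℕ → ℂ) (_ : ∀ n, x n = y n * z n),
        dNorm a p y * gNorm a p z := by
  have hp0 : 0 < p := one_pos.trans_le hp
  refine ⟨⟨fun hx => ?_, fun ⟨y, z, hy, hz, hxyz⟩ => ?_⟩, le_antisymm ?_ ?_⟩
  · obtain ⟨y, z, hy, hz, hxyz⟩ := exists_factorization_of_lpNorm_ne_top hp0 ha hx.ne
    exact ⟨y, z, hy.trans_lt hx, hz.trans_lt ENNReal.one_lt_top, hxyz⟩
  · exact (lpNorm_le_dNorm_mul_gNorm hp0 ha hxyz).trans_lt (ENNReal.mul_lt_top hy hz)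
  · exact le_iInf₂ fun y z => le_iInf fun hxyz => lpNorm_le_dNorm_mul_gNorm hp0 ha hxyz
  · rcases eq_or_ne (lpNorm p x) ∞ with hx | hx
    · exact hx ▸ le_top
    obtain ⟨y, z, hy, hz, hxyz⟩ := exists_factorization_of_lpNorm_ne_top hp0 ha hx
    refine iInf₂_le_of_le y z (iInf_le_of_le hxyz ?_)
    simpa using mul_le_mul' hy hz
end

section
/- One direction of the factorization: let p ≥ 1, (a_n) positive with A_n = ∑_{j≤n} a_j, y ∈ d(p) and z ∈ g(p). Then the coordinatewise product x = y·z lies in ℓ^p and ‖x‖_p ≤ ‖y‖_{d(p)} ‖z‖_{g(p)}. -/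
open scoped ENNReal NNReal

/-- Abel summation identity in `ℝ≥0∞` for nonincreasing weights. -/
lemma abel_enn (w c : ℕ → ℝ≥0∞) (hw : ∀ n, w (n+1) ≤ w n) (N : ℕ) :
    ∑ n ∈ Finset.range (N+1), w n * c n
      = ∑ n ∈ Finset.range N, (w n - w (n+1)) * (∑ k ∈ Finset.range (n+1), c k)
        + w N * ∑ k ∈ Finset.range (N+1), c k := by
  induction N with
  | zero => simp
  | succ N ih =>
    rw [Finset.sum_range_succ, ih, Finset.sum_range_succ (f := fun n =>
      (w n - w (n+1)) * (∑ k ∈ Finset.range (n+1), c k))]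
    have key : w N * ∑ k ∈ Finset.range (N+1), c k
        = (w N - w (N+1)) * (∑ k ∈ Finset.range (N+1), c k)
          + w (N+1) * ∑ k ∈ Finset.range (N+1), c k := by
      rw [← add_mul, tsub_add_cancel_of_le (hw N)]
    rw [key, Finset.sum_range_succ c (N+1), mul_add]
    ring

/-- The easy direction of Bennett's factorization: if `y ∈ d(p)` and `z ∈ g(p)`
then `y·z ∈ ℓ^p` with `‖y·z‖_p ≤ ‖y‖_{d(p)} ‖z‖_{g(p)}`. -/
theorem stmt14 (p : ℝ) (hp : 1 ≤ p) (a : ℕ → ℝ) (ha : ∀ n, 0 < a n)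
    (y z : ℕ → ℂ) (hy : dNorm a p y < ∞) (hz : gNorm a p z < ∞) :
    lpNorm p (fun n => y n * z n) ≤ dNorm a p y * gNorm a p z := by
  have hp0 : (0:ℝ) < p := lt_of_lt_of_le one_pos hp
  have hpne : p ≠ 0 := ne_of_gt hp0
  set w : ℕ → ℝ≥0∞ := fun n => ⨆ k : ℕ, ⨆ _ : n ≤ k, (‖y k‖₊ : ℝ≥0∞) ^ p with hwdef
  set c : ℕ → ℝ≥0∞ := fun n => (‖z n‖₊ : ℝ≥0∞) ^ p with hcdef
  set a' : ℕ → ℝ≥0∞ := fun n => ENNReal.ofReal (a n) with ha'def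
  have ha'0 : ∀ n, a' n ≠ 0 := fun n => (ENNReal.ofReal_pos.mpr (ha n)).ne'
  have ha'top : ∀ n, a' n ≠ ∞ := fun n => ENNReal.ofReal_ne_top
  set G := gNorm a p z with hGdef
  set D := dNorm a p y with hDdef
  -- D^p is the weighted sum
  have hDp : D ^ p = ∑' n, a' n * w n := by
    rw [hDdef, dNorm, ← ENNReal.rpow_mul, one_div_mul_cancel hpne, ENNReal.rpow_one]
  have hsum_lt : (∑' n, a' n * w n) < ∞ := by
    rw [← hDp]
    exact ENNReal.rpow_lt_top_of_nonneg hp0.le hy.ne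
  have hwfin : ∀ n, w n ≠ ∞ := by
    intro n hn
    have h1 : a' n * w n < ∞ := lt_of_le_of_lt (ENNReal.le_tsum n) hsum_lt
    rw [hn, ENNReal.mul_top (ha'0 n)] at h1
    exact lt_irrefl _ h1
  have hw : ∀ n, w (n+1) ≤ w n := by
    intro n
    exact iSup₂_le fun k hk => le_iSup₂ (f := fun k (_ : n ≤ k) => (‖y k‖₊ : ℝ≥0∞) ^ p)
      k (n.le_succ.trans hk)
  -- pointwise bound
  have hterm : ∀ n, (‖y n * z n‖₊ : ℝ≥0∞) ^ p ≤ w n * c n := by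
    intro n
    have : (‖y n * z n‖₊ : ℝ≥0∞) = (‖y n‖₊ : ℝ≥0∞) * (‖z n‖₊ : ℝ≥0∞) := by
      rw [nnnorm_mul]; push_cast; ring
    rw [this, ENNReal.mul_rpow_of_nonneg _ _ hp0.le]
    exact mul_le_mul_left
      (le_iSup₂ (f := fun k (_ : n ≤ k) => (‖y k‖₊ : ℝ≥0∞) ^ p) n le_rfl) _
  -- partial sums of c are controlled by G^p times partial sums of a'
  have hS : ∀ n, (∑ k ∈ Finset.range (n+1), c k)
      ≤ G ^ p * ∑ j ∈ Finset.range (n+1), a' j := by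
    intro n
    set Sa := ∑ j ∈ Finset.range (n+1), a' j with hSa
    have hSa0 : Sa ≠ 0 := by
      intro h
      exact ha'0 0 (by simpa using (Finset.sum_eq_zero_iff.mp h 0 (by simp)))
    have hSatop : Sa ≠ ∞ := ENNReal.sum_ne_top.mpr fun i _ => ha'top i
    have hle : (Sa⁻¹ * ∑ k ∈ Finset.range (n+1), c k) ^ (1/p) ≤ G := by
      rw [hGdef, gNorm]
      exact le_iSup (fun m => ((∑ j ∈ Finset.range (m + 1), ENNReal.ofReal (a j))⁻¹ *
        ∑ k ∈ Finset.range (m + 1), (‖z k‖₊ : ℝ≥0∞) ^ p) ^ (1 / p)) n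
    have hle2 : Sa⁻¹ * ∑ k ∈ Finset.range (n+1), c k ≤ G ^ p := by
      have := ENNReal.rpow_le_rpow hle hp0.le
      rwa [← ENNReal.rpow_mul, one_div_mul_cancel hpne, ENNReal.rpow_one] at this
    calc ∑ k ∈ Finset.range (n+1), c k
        = Sa * (Sa⁻¹ * ∑ k ∈ Finset.range (n+1), c k) := by
          rw [← mul_assoc, ENNReal.mul_inv_cancel hSa0 hSatop, one_mul]
      _ ≤ Sa * G ^ p := mul_le_mul_right hle2 _
      _ = G ^ p * Sa := mul_comm _ _
  -- main comparison via Abel summation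
  have hmain : ∀ N, ∑ n ∈ Finset.range (N+1), w n * c n
      ≤ G ^ p * ∑ n ∈ Finset.range (N+1), a' n * w n := by
    intro N
    calc ∑ n ∈ Finset.range (N+1), w n * c n
        = ∑ n ∈ Finset.range N, (w n - w (n+1)) * (∑ k ∈ Finset.range (n+1), c k)
          + w N * ∑ k ∈ Finset.range (N+1), c k := abel_enn w c hw N
      _ ≤ ∑ n ∈ Finset.range N, (w n - w (n+1)) * (G ^ p * ∑ j ∈ Finset.range (n+1), a' j)
          + w N * (G ^ p * ∑ j ∈ Finset.range (N+1), a' j) := by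
          gcongr with n hn
          exacts [hS n, hS N]
      _ = G ^ p * (∑ n ∈ Finset.range N, (w n - w (n+1)) * (∑ j ∈ Finset.range (n+1), a' j)
          + w N * ∑ j ∈ Finset.range (N+1), a' j) := by
          have e1 : ∑ n ∈ Finset.range N,
              (w n - w (n+1)) * (G ^ p * ∑ j ∈ Finset.range (n+1), a' j)
              = G ^ p * ∑ n ∈ Finset.range N,
                  (w n - w (n+1)) * ∑ j ∈ Finset.range (n+1), a' j := by
            rw [Finset.mul_sum]
            exact Finset.sum_congr rfl fun n _ => mul_left_comm _ _ _
          rw [e1, mul_left_comm (w N) (G ^ p), mul_add]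
      _ = G ^ p * ∑ n ∈ Finset.range (N+1), w n * a' n := by rw [← abel_enn w a' hw N]
      _ = G ^ p * ∑ n ∈ Finset.range (N+1), a' n * w n := by
          congr 1; exact Finset.sum_congr rfl fun n _ => mul_comm _ _
  -- tsum bound
  have htsum : (∑' n, (‖y n * z n‖₊ : ℝ≥0∞) ^ p) ≤ G ^ p * D ^ p := by
    rw [hDp, ENNReal.tsum_eq_iSup_sum]
    refine iSup_le fun s => ?_
    obtain ⟨N, hN⟩ := s.exists_nat_subset_range
    calc ∑ n ∈ s, (‖y n * z n‖₊ : ℝ≥0∞) ^ p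
        ≤ ∑ n ∈ Finset.range (N+1), (‖y n * z n‖₊ : ℝ≥0∞) ^ p :=
          Finset.sum_le_sum_of_subset
            (hN.trans (Finset.range_subset_range.mpr (Nat.le_succ N)))
      _ ≤ ∑ n ∈ Finset.range (N+1), w n * c n := Finset.sum_le_sum fun n _ => hterm n
      _ ≤ G ^ p * ∑ n ∈ Finset.range (N+1), a' n * w n := hmain N
      _ ≤ G ^ p * ∑' n, a' n * w n := by
          gcongr
          exact ENNReal.sum_le_tsum _
  -- conclude
  rw [lpNorm]
  calc (∑' n, (‖y n * z n‖₊ : ℝ≥0∞) ^ p) ^ (1/p)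
      ≤ (G ^ p * D ^ p) ^ (1/p) := ENNReal.rpow_le_rpow htsum (by positivity)
    _ = D * G := by
        rw [ENNReal.mul_rpow_of_nonneg _ _ (by positivity), ← ENNReal.rpow_mul,
          ← ENNReal.rpow_mul, mul_one_div_cancel hpne, ENNReal.rpow_one,
          ENNReal.rpow_one, mul_comm]
end

section
/- Dual of d(p): let p, q > 1 with 1/p + 1/q = 1 and (a_n) positive with partial sums A_n. Then the Banach dual of d(p) (under the pairing ⟨x,u⟩ = ∑ x_n u_n) equals the set of coordinatewise products ℓ^q · g(p): every x of the form x = y·z with y ∈ ℓ^q, z ∈ g(p) defines a bounded functional on d(p) with norm at most ‖y‖_q ‖z‖_{g(p)}, and conversely every x ∈ (d(p))^* factors as x = y·z with ‖y‖_q ‖z‖_{g(p)} ≤ ‖x‖_{(d(p))^*}. -/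
open scoped ENNReal NNReal

/-- The dual norm of `d(p)` at `x`, computed via the pairing `⟨x,u⟩ = ∑ x_n u_n`. -/
noncomputable def dDualNorm (a : ℕ → ℝ) (p : ℝ) (x : ℕ → ℂ) : ℝ≥0∞ :=
  ⨆ (u : ℕ → ℂ) (_ : dNorm a p u ≤ 1), ∑' n : ℕ, (‖x n‖₊ : ℝ≥0∞) * (‖u n‖₊ : ℝ≥0∞)

/-!
The inclusion `ℓ^q · g(p) ⊆ d(p)^*` is Hölder's inequality combined with Abel summation: the
partial sums of `‖z_k‖^p` are at most `‖z‖_{g(p)}^p A_n`, and the weights `sup_{k ≥ n} ‖u_k‖^p`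
decrease, so `∑ ‖z_n u_n‖^p ≤ ‖z‖_{g(p)}^p ‖u‖_{d(p)}^p`.

For the factorization, let `ℓ` be the level function of `x` with respect to `a`: the slope of the
least concave majorant of the polygon with vertices `(A_n, ∑_{k<n} ‖x_k‖)`. It decreases, is
constant on blocks over which `∑ ‖x_k‖ = ℓ ∑ a_k`, and `∑_{k<n} ‖x_k‖ / ℓ_k ≤ A_n`. Testing the dual
norm `M` of `x` against the decreasing sequence `ℓ^{q/p}` gives
`∑_{k<n} ‖x_k‖ ℓ_k^{q/p} ≤ M (∑_{k<n} a_k ℓ_k^q)^{1/p}`, and at block ends the left side equals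
`∑_{k<n} a_k ℓ_k^q`; an unfinished last block is handled up to a factor arbitrarily close to `1`.
Hence `∑ a_k ℓ_k^q ≤ M^q`, and `y_k = ‖x_k‖^{1/q} ℓ_k^{1/p}`, `z_k = x_k / y_k` do the job.
-/

open Finset

theorem ENNReal.sum_range_mul_le_of_antitone_s15 {c w : ℕ → ℝ≥0∞} {G : ℝ≥0∞}
    (hc : ∀ N, ∑ k ∈ range (N + 1), c k ≤ G * ∑ k ∈ range (N + 1), w k)
    {s : ℕ → ℝ≥0∞} (hs : Antitone s) (N : ℕ) :
    ∑ n ∈ range N, c n * s n ≤ G * ∑ n ∈ range N, w n * s n := by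
  induction N generalizing s with
  | zero => simp
  | succ N ih =>
    -- `s = (s - s N) + s N` on `range (N + 1)`, and `s - s N` vanishes at `N`
    set s' : ℕ → ℝ≥0∞ := fun n => s n - s N
    have hs' : Antitone s' := fun i j h => tsub_le_tsub_right (hs h) _
    have hsplit : ∀ f : ℕ → ℝ≥0∞, ∑ n ∈ range (N + 1), f n * s n =
        ∑ n ∈ range N, f n * s' n + (∑ n ∈ range (N + 1), f n) * s N := by
      intro f
      have hs'N : s' N = 0 := tsub_self _
      rw [sum_mul, ← add_zero (∑ n ∈ range N, f n * s' n), ← mul_zero (f N), ← hs'N,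
        ← sum_range_succ (fun n => f n * s' n), ← sum_add_distrib]
      refine sum_congr rfl fun n hn => ?_
      rw [← mul_add, tsub_add_cancel_of_le (hs (Nat.lt_succ_iff.mp (mem_range.mp hn)))]
    rw [hsplit c, hsplit w, mul_add, ← mul_assoc]
    exact add_le_add (ih hs') (mul_le_mul_left (hc N) _)

theorem ENNReal.tsum_mul_le_of_antitone_s15 {c w : ℕ → ℝ≥0∞} {G : ℝ≥0∞}
    (hc : ∀ N, ∑ k ∈ range (N + 1), c k ≤ G * ∑ k ∈ range (N + 1), w k)
    {s : ℕ → ℝ≥0∞} (hs : Antitone s) :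
    ∑' n, c n * s n ≤ G * ∑' n, w n * s n := by
  rw [ENNReal.tsum_eq_iSup_nat]
  exact iSup_le fun N => (sum_range_mul_le_of_antitone_s15 hc hs N).trans
    (mul_le_mul_right (ENNReal.sum_le_tsum _) G)

theorem exists_lt_of_lt_biSup_of_forall_lt {α : Type*} [CompleteLinearOrder α] {f : ℕ → α}
    {m : ℕ} (hf : ∀ j, m ≤ j → f j < ⨆ (i) (_ : m ≤ i), f i) {c : α}
    (hc : c < ⨆ (i) (_ : m ≤ i), f i) (n : ℕ) : ∃ j, n ≤ j ∧ c < f j := by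
  by_contra! h
  have hhead : (Ico m n).sup f < ⨆ (i) (_ : m ≤ i), f i :=
    (Finset.sup_lt_iff (bot_le.trans_lt hc)).2 fun j hj => hf j (mem_Ico.1 hj).1
  have hsplit : ⨆ (i) (_ : m ≤ i), f i ≤ c ⊔ (Ico m n).sup f := iSup₂_le fun j hj => by
    rcases lt_or_ge j n with hjn | hjn
    · exact le_sup_of_le_right (le_sup (mem_Ico.2 ⟨hj, hjn⟩))
    · exact le_sup_of_le_left (h j hjn)
  exact (hsplit.trans_lt (max_lt hc hhead)).false

theorem ENNReal.mul_rpow_le_of_mul_le_mul_rpow {p q : ℝ} (hpq : p.HolderConjugate q)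
    {t θ M : ℝ≥0∞} (ht : t ≠ ∞) (h : θ * t ≤ M * t ^ (1 / p)) : θ * t ^ (1 / q) ≤ M := by
  rcases eq_or_ne t 0 with rfl | ht0
  · simp [ENNReal.zero_rpow_of_pos hpq.symm.inv_pos]
  have hsplit : t ^ (1 / q) * t ^ (1 / p) = t := by
    rw [← ENNReal.rpow_add _ _ ht0 ht, add_comm, one_div, one_div, hpq.inv_add_inv_eq_one,
      ENNReal.rpow_one]
  refine (ENNReal.mul_le_mul_iff_left ?_ (ENNReal.rpow_ne_top_of_nonneg hpq.one_div_nonneg ht)).1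
    (by rwa [mul_assoc, hsplit])
  exact (ENNReal.rpow_pos (pos_iff_ne_zero.2 ht0) ht).ne'

theorem ENNReal.div_rpow_mul_rpow_rpow_eq {p q : ℝ} (hpq : p.HolderConjugate q) {w l : ℝ≥0∞}
    (hw0 : w ≠ 0) (hw : w ≠ ∞) :
    (w / (w ^ (1 / q) * l ^ (1 / p))) ^ p = w / l := by
  rw [ENNReal.div_rpow_of_nonneg _ _ hpq.nonneg, ENNReal.mul_rpow_of_nonneg _ _ hpq.nonneg,
    ← ENNReal.rpow_mul, ← ENNReal.rpow_mul, one_div_mul_cancel hpq.ne_zero, ENNReal.rpow_one,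
    one_div_mul_eq_div, hpq.div_conj_eq_sub_one]
  have hwp : w ^ p = w * w ^ (p - 1) := by
    have h := ENNReal.rpow_add 1 (p - 1) hw0 hw
    rwa [add_sub_cancel, ENNReal.rpow_one] at h
  rw [hwp, mul_comm _ l,
    ENNReal.mul_div_mul_right _ _ (ENNReal.rpow_pos (pos_iff_ne_zero.2 hw0) hw).ne'
      (ENNReal.rpow_ne_top_of_nonneg hpq.sub_one_pos.le hw)]

theorem coe_nnnorm_ofReal_toReal {e : ℝ≥0∞} (he : e ≠ ∞) :
    (‖((e.toReal : ℝ) : ℂ)‖₊ : ℝ≥0∞) = e := by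
  rw [Complex.nnnorm_real, ← enorm_eq_nnnorm, Real.enorm_eq_ofReal ENNReal.toReal_nonneg,
    ENNReal.ofReal_toReal he]

theorem tsum_mul_le_lpNorm_mul {p q : ℝ} (hpq : p.HolderConjugate q) (f g : ℕ → ℂ) :
    ∑' n, (‖f n‖₊ : ℝ≥0∞) * ‖g n‖₊ ≤ lpNorm p f * lpNorm q g := by
  rw [ENNReal.tsum_eq_iSup_nat]
  refine iSup_le fun N => (ENNReal.inner_le_Lp_mul_Lq _ _ _ hpq).trans ?_
  unfold lpNorm
  gcongr
  exacts [hpq.one_div_nonneg, ENNReal.sum_le_tsum _, hpq.symm.one_div_nonneg, ENNReal.sum_le_tsum _]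

noncomputable def weightSum (a : ℕ → ℝ) (m j : ℕ) : ℝ≥0∞ := ∑ k ∈ Ico m j, ENNReal.ofReal (a k)

noncomputable def normSum (x : ℕ → ℂ) (m j : ℕ) : ℝ≥0∞ := ∑ k ∈ Ico m j, (‖x k‖₊ : ℝ≥0∞)

noncomputable def blockRatio (a : ℕ → ℝ) (x : ℕ → ℂ) (m j : ℕ) : ℝ≥0∞ :=
  normSum x m (j + 1) / weightSum a m (j + 1)

noncomputable def blockSup (a : ℕ → ℝ) (x : ℕ → ℂ) (m : ℕ) : ℝ≥0∞ :=
  ⨆ (j) (_ : m ≤ j), blockRatio a x m j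

/-- A block starting at `m` is closed after the first `j` at which the supremum `blockSup a x m` of
the slopes from the vertex `m` is attained; the next block starts at `j + 1`. `level a x n` is the
slope of the least concave majorant over the block containing `n`. -/
noncomputable def blockStart (a : ℕ → ℝ) (x : ℕ → ℂ) : ℕ → ℕ
  | 0 => 0
  | n + 1 =>
    if blockRatio a x (blockStart a x n) n = blockSup a x (blockStart a x n) then n + 1
    else blockStart a x n

noncomputable def level (a : ℕ → ℝ) (x : ℕ → ℂ) (n : ℕ) : ℝ≥0∞ :=
  blockSup a x (blockStart a x n)

noncomputable def levelFactor (a : ℕ → ℝ) (x : ℕ → ℂ) (p q : ℝ) (k : ℕ) : ℂ :=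
  (((‖x k‖₊ : ℝ≥0∞) ^ (1 / q) * level a x k ^ (1 / p)).toReal : ℂ)

noncomputable def levelSum (a : ℕ → ℝ) (x : ℕ → ℂ) (c : ℕ → ℝ≥0∞) (φ : ℝ≥0∞ → ℝ≥0∞)
    (n : ℕ) : ℝ≥0∞ :=
  ∑ k ∈ range n, c k * φ (level a x k)

section

variable {a : ℕ → ℝ} {x : ℕ → ℂ} {p q : ℝ}

theorem weightSum_pos (ha : ∀ n, 0 < a n) {m j : ℕ} (h : m < j) : 0 < weightSum a m j :=
  (ENNReal.ofReal_pos.2 (ha m)).trans_le <|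
    single_le_sum (f := fun k => ENNReal.ofReal (a k)) (fun _ _ => zero_le) (by simp [h])

theorem weightSum_ne_top (m j : ℕ) : weightSum a m j ≠ ∞ := by
  simp [weightSum, ENNReal.sum_eq_top]

theorem weightSum_add {m k j : ℕ} (hmk : m ≤ k) (hkj : k ≤ j) :
    weightSum a m k + weightSum a k j = weightSum a m j :=
  sum_Ico_consecutive _ hmk hkj

theorem normSum_add {m k j : ℕ} (hmk : m ≤ k) (hkj : k ≤ j) :
    normSum x m k + normSum x k j = normSum x m j :=
  sum_Ico_consecutive _ hmk hkj

theorem sum_range_ofReal_eq_weightSum (n : ℕ) :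
    ∑ k ∈ range n, ENNReal.ofReal (a k) = weightSum a 0 n := by
  rw [weightSum, range_eq_Ico]

theorem sum_range_rpow_le_gNorm_rpow_mul (hp : 0 < p) (ha : ∀ n, 0 < a n) (z : ℕ → ℂ)
    (N : ℕ) : ∑ k ∈ range (N + 1), (‖z k‖₊ : ℝ≥0∞) ^ p ≤
      gNorm a p z ^ p * ∑ k ∈ range (N + 1), ENNReal.ofReal (a k) := by
  have hN := le_iSup (fun n => ((∑ j ∈ range (n + 1), ENNReal.ofReal (a j))⁻¹ *
      ∑ k ∈ range (n + 1), (‖z k‖₊ : ℝ≥0∞) ^ p) ^ (1 / p)) N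
  rw [← gNorm, one_div, ENNReal.rpow_inv_le_iff hp, sum_range_ofReal_eq_weightSum,
    ENNReal.inv_mul_le_iff (weightSum_pos ha N.succ_pos).ne' (weightSum_ne_top _ _)] at hN
  rwa [mul_comm, sum_range_ofReal_eq_weightSum]

theorem lpNorm_mul_le_gNorm_mul_dNorm (hp : 0 < p) (ha : ∀ n, 0 < a n) (z u : ℕ → ℂ) :
    lpNorm p (fun n => z n * u n) ≤ gNorm a p z * dNorm a p u := by
  set s : ℕ → ℝ≥0∞ := fun n => ⨆ (k) (_ : n ≤ k), (‖u k‖₊ : ℝ≥0∞) ^ p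
  have hs : Antitone s := fun m n h => biSup_mono fun k hk => h.trans hk
  rw [lpNorm, one_div, ENNReal.rpow_inv_le_iff hp, ENNReal.mul_rpow_of_nonneg _ _ hp.le]
  calc ∑' n, (‖z n * u n‖₊ : ℝ≥0∞) ^ p
      ≤ ∑' n, (‖z n‖₊ : ℝ≥0∞) ^ p * s n := by
        refine ENNReal.tsum_le_tsum fun n => ?_
        rw [nnnorm_mul, ENNReal.coe_mul, ENNReal.mul_rpow_of_nonneg _ _ hp.le]
        exact mul_le_mul_right (le_iSup₂ (f := fun k (_ : n ≤ k) => (‖u k‖₊ : ℝ≥0∞) ^ p) n le_rfl) _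
    _ ≤ gNorm a p z ^ p * ∑' n, ENNReal.ofReal (a n) * s n :=
        ENNReal.tsum_mul_le_of_antitone_s15 (sum_range_rpow_le_gNorm_rpow_mul hp ha z) hs
    _ = gNorm a p z ^ p * dNorm a p u ^ p := by
        rw [dNorm, one_div, ENNReal.rpow_inv_rpow hp.ne']

theorem tsum_nnnorm_mul_mul_le_lpNorm_gNorm_dNorm (hpq : p.HolderConjugate q) (ha : ∀ n, 0 < a n)
    (y z u : ℕ → ℂ) : ∑' n, (‖y n * z n‖₊ : ℝ≥0∞) * ‖u n‖₊ ≤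
      lpNorm q y * gNorm a p z * dNorm a p u := calc
  _ = ∑' n, (‖y n‖₊ : ℝ≥0∞) * ‖z n * u n‖₊ := by simp only [nnnorm_mul, ENNReal.coe_mul, mul_assoc]
  _ ≤ lpNorm q y * lpNorm p (fun n => z n * u n) := tsum_mul_le_lpNorm_mul hpq.symm _ _
  _ ≤ lpNorm q y * gNorm a p z * dNorm a p u := by
      rw [mul_assoc]; gcongr; exact lpNorm_mul_le_gNorm_mul_dNorm hpq.pos ha z u

theorem coe_nnnorm_truncation {v : ℕ → ℝ≥0∞} (hv_top : ∀ k, v k ≠ ∞) (n k : ℕ) :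
    (‖if k < n then ((v k).toReal : ℂ) else 0‖₊ : ℝ≥0∞) = if k < n then v k else 0 := by
  split_ifs
  exacts [coe_nnnorm_ofReal_toReal (hv_top k), by simp]

theorem dNorm_truncation_le (hp : 0 < p) {v : ℕ → ℝ≥0∞} (hv : Antitone v)
    (hv_top : ∀ k, v k ≠ ∞) (n : ℕ) :
    dNorm a p (fun k => if k < n then ((v k).toReal : ℂ) else 0) ≤
      (∑ k ∈ range n, ENNReal.ofReal (a k) * v k ^ p) ^ (1 / p) := calc
  _ ≤ (∑' m, ENNReal.ofReal (a m) * if m < n then v m ^ p else 0) ^ (1 / p) := by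
      unfold dNorm
      gcongr with m
      refine iSup₂_le fun k hmk => ?_
      rw [coe_nnnorm_truncation hv_top]
      split_ifs with hk hm hm
      · exact ENNReal.rpow_le_rpow (hv hmk) hp.le
      · omega
      all_goals simp [hp]
  _ = _ := by
      rw [tsum_eq_sum (s := range n) (fun m hm => by simp [mem_range.not.1 hm])]
      exact congrArg (· ^ (1 / p)) (sum_congr rfl fun m hm => by rw [if_pos (mem_range.1 hm)])

theorem sum_range_mul_le_dDualNorm (hp : 0 < p) {v : ℕ → ℝ≥0∞} (hv : Antitone v)
    (hv_top : ∀ k, v k ≠ ∞) {n : ℕ} (h : ∑ k ∈ range n, ENNReal.ofReal (a k) * v k ^ p ≤ 1) :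
    ∑ k ∈ range n, (‖x k‖₊ : ℝ≥0∞) * v k ≤ dDualNorm a p x := by
  set u : ℕ → ℂ := fun k => if k < n then ((v k).toReal : ℂ) else 0
  have hu : dNorm a p u ≤ 1 :=
    (dNorm_truncation_le hp hv hv_top n).trans (ENNReal.rpow_le_one h (by positivity))
  refine le_trans (le_of_eq ?_) (le_iSup₂ (f := fun u (_ : dNorm a p u ≤ 1) =>
    ∑' k, (‖x k‖₊ : ℝ≥0∞) * ‖u k‖₊) u hu)
  rw [tsum_eq_sum (s := range n) fun k hk => by simp [u, mem_range.not.1 hk]]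
  exact sum_congr rfl fun k hk => by
    rw [coe_nnnorm_truncation hv_top, if_pos (mem_range.1 hk)]

theorem sum_range_mul_le_dDualNorm_mul (hp : 0 < p) (ha : ∀ n, 0 < a n) {v : ℕ → ℝ≥0∞}
    (hv : Antitone v) (hv_top : ∀ k, v k ≠ ∞) (n : ℕ) :
    ∑ k ∈ range n, (‖x k‖₊ : ℝ≥0∞) * v k ≤
      dDualNorm a p x * (∑ k ∈ range n, ENNReal.ofReal (a k) * v k ^ p) ^ (1 / p) := by
  set S := (∑ k ∈ range n, ENNReal.ofReal (a k) * v k ^ p) ^ (1 / p) with hS_def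
  have hS : S ≠ ∞ := ENNReal.rpow_ne_top_of_nonneg (by positivity) <| by
    simp [ENNReal.sum_eq_top, ENNReal.mul_eq_top, ENNReal.rpow_eq_top_iff, hv_top, hp.le]
  rcases eq_or_ne S 0 with hS0 | hS0
  · have hv0 : ∀ k ∈ range n, v k = 0 := fun k hk => by
      rw [hS_def, ENNReal.rpow_eq_zero_iff_of_pos (by positivity), sum_eq_zero_iff] at hS0
      have hk0 := hS0 k hk
      rw [mul_eq_zero, ENNReal.ofReal_eq_zero, ENNReal.rpow_eq_zero_iff_of_pos hp] at hk0
      exact hk0.resolve_left (ha k).not_ge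
    rw [sum_eq_zero fun k hk => by rw [hv0 k hk, mul_zero]]
    exact zero_le
  have hSp : S ^ p = ∑ k ∈ range n, ENNReal.ofReal (a k) * v k ^ p := by
    rw [hS_def, one_div, ENNReal.rpow_inv_rpow hp.ne']
  have hnormalized := sum_range_mul_le_dDualNorm (a := a) (x := x) hp (v := fun k => v k / S)
    (fun i j h => ENNReal.div_le_div_right (hv h) S) (fun k => ENNReal.div_ne_top (hv_top k) hS0)
    (n := n) <| le_of_eq <| by
      simp_rw [ENNReal.div_rpow_of_nonneg _ _ hp.le, div_eq_mul_inv, ← mul_assoc, ← sum_mul,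
        ← hSp]
      exact ENNReal.mul_inv_cancel (ENNReal.rpow_pos (pos_iff_ne_zero.2 hS0) hS).ne'
        (ENNReal.rpow_ne_top_of_nonneg hp.le hS)
  simp_rw [div_eq_mul_inv, ← mul_assoc, ← sum_mul, ← div_eq_mul_inv] at hnormalized
  rwa [ENNReal.div_le_iff hS0 hS] at hnormalized

theorem normSum_zero_le_dDualNorm_mul (hp : 0 < p) (ha : ∀ n, 0 < a n) (n : ℕ) :
    normSum x 0 n ≤ dDualNorm a p x * weightSum a 0 n ^ (1 / p) := by
  simpa [normSum, weightSum, ← range_eq_Ico] using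
    sum_range_mul_le_dDualNorm_mul (x := x) hp ha (v := fun _ => 1) antitone_const
      (fun _ => ENNReal.one_ne_top) n

theorem blockRatio_le_blockSup {m j : ℕ} (h : m ≤ j) : blockRatio a x m j ≤ blockSup a x m :=
  le_iSup₂ (f := fun j (_ : m ≤ j) => blockRatio a x m j) j h

theorem normSum_le_blockSup_mul (ha : ∀ n, 0 < a n) {m j : ℕ} (h : m ≤ j) :
    normSum x m (j + 1) ≤ blockSup a x m * weightSum a m (j + 1) :=
  (ENNReal.div_le_iff (weightSum_pos ha (Nat.lt_succ_of_le h)).ne' (weightSum_ne_top _ _)).1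
    (blockRatio_le_blockSup h)

theorem normSum_eq_blockSup_mul (ha : ∀ n, 0 < a n) {m j : ℕ} (h : m ≤ j)
    (heq : blockRatio a x m j = blockSup a x m) :
    normSum x m (j + 1) = blockSup a x m * weightSum a m (j + 1) :=
  ((ENNReal.eq_div_iff (weightSum_pos ha (Nat.lt_succ_of_le h)).ne' (weightSum_ne_top _ _)).1
    heq.symm).symm.trans (mul_comm _ _)

theorem blockSup_ne_top (hp : 1 < p) (ha : ∀ n, 0 < a n) (hM : dDualNorm a p x ≠ ∞) (m : ℕ) :
    blockSup a x m ≠ ∞ := by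
  set M := dDualNorm a p x
  set B := weightSum a 0 m
  have hbound : blockSup a x m ≤ M * (1 + B) / ENNReal.ofReal (a m) + M := by
    refine iSup₂_le fun j hj => ?_
    set t := weightSum a m (j + 1)
    have ht0 : t ≠ 0 := (weightSum_pos ha (Nat.lt_succ_of_le hj)).ne'
    have hat : ENNReal.ofReal (a m) ≤ t :=
      single_le_sum (f := fun k => ENNReal.ofReal (a k)) (fun _ _ => zero_le) (by simp; omega)
    have hrpow : weightSum a 0 (j + 1) ^ (1 / p) ≤ 1 + weightSum a 0 (j + 1) := by
      rcases le_total (weightSum a 0 (j + 1)) 1 with h1 | h1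
      · exact (ENNReal.rpow_le_one h1 (by positivity)).trans le_self_add
      · calc weightSum a 0 (j + 1) ^ (1 / p) ≤ weightSum a 0 (j + 1) ^ (1 : ℝ) :=
              ENNReal.rpow_le_rpow_of_exponent_le h1 (by rw [div_le_one (by linarith)]; exact hp.le)
          _ ≤ 1 + weightSum a 0 (j + 1) := by rw [ENNReal.rpow_one]; exact le_add_self
    have hnorm : normSum x m (j + 1) ≤ M * (1 + B) + M * t := calc
      normSum x m (j + 1) ≤ normSum x 0 (j + 1) :=
          sum_le_sum_of_subset (Ico_subset_Ico (Nat.zero_le m) le_rfl)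
      _ ≤ M * weightSum a 0 (j + 1) ^ (1 / p) :=
          normSum_zero_le_dDualNorm_mul (by linarith) ha _
      _ ≤ M * (1 + weightSum a 0 (j + 1)) := by gcongr
      _ = M * (1 + B) + M * t := by
          rw [← weightSum_add (Nat.zero_le m) (by omega : m ≤ j + 1)]; ring
    calc blockRatio a x m j ≤ (M * (1 + B) + M * t) / t := ENNReal.div_le_div_right hnorm t
      _ = M * (1 + B) / t + M := by
          rw [ENNReal.add_div, ENNReal.mul_div_cancel_right ht0 (weightSum_ne_top _ _)]
      _ ≤ M * (1 + B) / ENNReal.ofReal (a m) + M := by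
          gcongr ?_ + M; exact ENNReal.div_le_div_left hat _
  refine ne_top_of_le_ne_top (ENNReal.add_ne_top.2 ⟨ENNReal.div_ne_top ?_ ?_, hM⟩) hbound
  · exact ENNReal.mul_ne_top hM (ENNReal.add_ne_top.2 ⟨ENNReal.one_ne_top, weightSum_ne_top _ _⟩)
  · exact (ENNReal.ofReal_pos.2 (ha m)).ne'

theorem blockStart_succ_of_eq {n : ℕ}
    (h : blockRatio a x (blockStart a x n) n = blockSup a x (blockStart a x n)) :
    blockStart a x (n + 1) = n + 1 :=
  if_pos h

theorem blockStart_succ_of_ne {n : ℕ}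
    (h : blockRatio a x (blockStart a x n) n ≠ blockSup a x (blockStart a x n)) :
    blockStart a x (n + 1) = blockStart a x n :=
  if_neg h

theorem blockStart_le (n : ℕ) : blockStart a x n ≤ n := by
  induction n with
  | zero => rfl
  | succ n ih =>
    by_cases h : blockRatio a x (blockStart a x n) n = blockSup a x (blockStart a x n)
    · rw [blockStart_succ_of_eq h]
    · rw [blockStart_succ_of_ne h]; omega

theorem blockStart_eq_of_mem {n k : ℕ} (h₁ : blockStart a x n ≤ k) (h₂ : k ≤ n) :
    blockStart a x k = blockStart a x n := by
  induction n with
  | zero => rw [Nat.le_zero.1 h₂]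
  | succ n ih =>
    by_cases h : blockRatio a x (blockStart a x n) n = blockSup a x (blockStart a x n)
    · rw [blockStart_succ_of_eq h] at h₁ ⊢
      rw [le_antisymm h₂ h₁, blockStart_succ_of_eq h]
    · rw [blockStart_succ_of_ne h] at h₁ ⊢
      rcases Nat.lt_or_ge k (n + 1) with hk | hk
      · exact ih h₁ (Nat.lt_succ_iff.1 hk)
      · rw [le_antisymm h₂ hk, blockStart_succ_of_ne h]

theorem blockStart_blockStart (n : ℕ) : blockStart a x (blockStart a x n) = blockStart a x n :=
  blockStart_eq_of_mem le_rfl (blockStart_le n)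

theorem blockStart_eq_of_forall_ne {n : ℕ} (h : ∀ m, n ≤ m → blockStart a x m ≠ m) {j : ℕ}
    (hj : blockStart a x n ≤ j) : blockStart a x j = blockStart a x n := by
  rcases le_total j n with hjn | hnj
  · exact blockStart_eq_of_mem hj hjn
  induction j, hnj using Nat.le_induction with
  | base => rfl
  | succ j hnj ih =>
    have hj' := ih ((blockStart_le n).trans hnj)
    by_cases hr : blockRatio a x (blockStart a x j) j = blockSup a x (blockStart a x j)
    · exact absurd (blockStart_succ_of_eq hr) (h _ (hnj.trans j.le_succ))
    · rw [blockStart_succ_of_ne hr, hj']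

theorem blockRatio_ne_blockSup_of_forall_ne {n : ℕ} (h : ∀ m, n ≤ m → blockStart a x m ≠ m)
    {j : ℕ} (hj : blockStart a x n ≤ j) :
    blockRatio a x (blockStart a x n) j ≠ blockSup a x (blockStart a x n) := by
  intro heq
  rw [← blockStart_eq_of_forall_ne h hj] at heq
  have hsucc := blockStart_succ_of_eq heq
  rw [blockStart_eq_of_forall_ne h (hj.trans j.le_succ)] at hsucc
  omega

theorem level_eq_of_mem {n k : ℕ} (h₁ : blockStart a x n ≤ k) (h₂ : k ≤ n) :
    level a x k = level a x n := by
  rw [level, level, blockStart_eq_of_mem h₁ h₂]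

theorem level_succ_le (ha : ∀ n, 0 < a n) (hσ : ∀ m, blockSup a x m ≠ ∞) (n : ℕ) :
    level a x (n + 1) ≤ level a x n := by
  set s := blockStart a x n
  have hsn : s ≤ n := blockStart_le n
  by_cases hr : blockRatio a x s n = blockSup a x s
  · rw [level, level, blockStart_succ_of_eq hr]
    refine iSup₂_le fun j hj => ?_
    have hle := normSum_le_blockSup_mul (x := x) ha (hsn.trans (by omega : n ≤ j))
    rw [← normSum_add (by omega : s ≤ n + 1) (by omega : n + 1 ≤ j + 1),
      ← weightSum_add (by omega : s ≤ n + 1) (by omega : n + 1 ≤ j + 1), mul_add,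
      normSum_eq_blockSup_mul ha hsn hr,
      ENNReal.add_le_add_iff_left (ENNReal.mul_ne_top (hσ s) (weightSum_ne_top _ _))] at hle
    rwa [blockRatio, ENNReal.div_le_iff (weightSum_pos ha (by omega)).ne' (weightSum_ne_top _ _)]
  · rw [level, level, blockStart_succ_of_ne hr]

theorem level_antitone (ha : ∀ n, 0 < a n) (hσ : ∀ m, blockSup a x m ≠ ∞) :
    Antitone (level a x) :=
  antitone_nat_of_succ_le (level_succ_le ha hσ)

theorem level_ne_zero {n : ℕ} (hx : x n ≠ 0) : level a x n ≠ 0 := by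
  have hnorm : (‖x n‖₊ : ℝ≥0∞) ≤ normSum x (blockStart a x n) (n + 1) :=
    single_le_sum (f := fun k => (‖x k‖₊ : ℝ≥0∞)) (fun _ _ => zero_le)
      (mem_Ico.2 ⟨blockStart_le n, n.lt_succ_self⟩)
  have hpos : 0 < blockRatio a x (blockStart a x n) n := by
    rw [blockRatio, ENNReal.div_pos_iff]
    exact ⟨((by simpa using hx : (0 : ℝ≥0∞) < ‖x n‖₊).trans_le hnorm).ne', weightSum_ne_top _ _⟩
  exact (hpos.trans_le (blockRatio_le_blockSup (blockStart_le n))).ne'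

theorem levelSum_succ (c : ℕ → ℝ≥0∞) (φ : ℝ≥0∞ → ℝ≥0∞) (n : ℕ) :
    levelSum a x c φ (n + 1) = levelSum a x c φ (blockStart a x n) +
      (∑ k ∈ Ico (blockStart a x n) (n + 1), c k) * φ (level a x n) := by
  rw [levelSum, levelSum, ← sum_range_add_sum_Ico _ ((blockStart_le n).trans n.le_succ),
    sum_mul]
  refine congrArg _ (sum_congr rfl fun k hk => ?_)
  rw [mem_Ico] at hk
  rw [level_eq_of_mem hk.1 (Nat.lt_succ_iff.1 hk.2)]

theorem levelSum_mono (c : ℕ → ℝ≥0∞) (φ : ℝ≥0∞ → ℝ≥0∞) : Monotone (levelSum a x c φ) :=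
  fun _ _ h => sum_le_sum_of_subset (range_subset_range.2 h)

theorem levelSum_nnnorm_le_levelSum_ofReal (ha : ∀ n, 0 < a n) (φ : ℝ≥0∞ → ℝ≥0∞) (n : ℕ) :
    levelSum a x (fun k => ‖x k‖₊) φ n ≤
      levelSum a x (fun k => ENNReal.ofReal (a k)) (fun l => l * φ l) n := by
  induction n using Nat.strong_induction_on with
  | _ n ih =>
    rcases n with _ | n
    · simp [levelSum]
    rw [levelSum_succ, levelSum_succ, ← normSum.eq_1, ← weightSum.eq_1]
    gcongr ?_ + ?_
    · exact ih _ (Nat.lt_succ_of_le (blockStart_le n))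
    · calc normSum x (blockStart a x n) (n + 1) * φ (level a x n)
          ≤ level a x n * weightSum a (blockStart a x n) (n + 1) * φ (level a x n) := by
            gcongr; exact normSum_le_blockSup_mul ha (blockStart_le n)
        _ = _ := by ring

theorem levelSum_nnnorm_eq_levelSum_ofReal_of_blockStart_eq (ha : ∀ n, 0 < a n)
    (φ : ℝ≥0∞ → ℝ≥0∞) {n : ℕ} (h : blockStart a x n = n) :
    levelSum a x (fun k => ‖x k‖₊) φ n =
      levelSum a x (fun k => ENNReal.ofReal (a k)) (fun l => l * φ l) n := by
  induction n using Nat.strong_induction_on with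
  | _ n ih =>
    rcases n with _ | n
    · simp [levelSum]
    have hattained : blockRatio a x (blockStart a x n) n = blockSup a x (blockStart a x n) := by
      by_contra hne
      have := blockStart_le (a := a) (x := x) n
      rw [blockStart_succ_of_ne hne] at h
      omega
    rw [levelSum_succ, levelSum_succ, ← normSum.eq_1, ← weightSum.eq_1,
      ih _ (Nat.lt_succ_of_le (blockStart_le n)) (blockStart_blockStart n),
      normSum_eq_blockSup_mul ha (blockStart_le n) hattained, ← level]
    ring

theorem exists_ge_mul_levelSum_ofReal_le_levelSum_nnnorm (ha : ∀ n, 0 < a n)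
    (hσ : ∀ m, blockSup a x m ≠ ∞) (φ : ℝ≥0∞ → ℝ≥0∞) {θ : ℝ≥0∞} (hθ : θ < 1) (n : ℕ) :
    ∃ m, n ≤ m ∧ θ * levelSum a x (fun k => ENNReal.ofReal (a k)) (fun l => l * φ l) m ≤
      levelSum a x (fun k => ‖x k‖₊) φ m := by
  by_cases hb : ∃ m, n ≤ m ∧ blockStart a x m = m
  · obtain ⟨m, hnm, hm⟩ := hb
    refine ⟨m, hnm, ?_⟩
    rw [← levelSum_nnnorm_eq_levelSum_ofReal_of_blockStart_eq ha φ hm]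
    exact mul_le_of_le_one_left' hθ.le
  simp only [not_exists, not_and] at hb
  -- The block containing `n` never closes, so the supremum of the slopes from its start is not
  -- attained and is approached beyond every index.
  set s := blockStart a x n
  obtain ⟨j, hnj, hj⟩ : ∃ j, n ≤ j ∧
      θ * blockSup a x s * weightSum a s (j + 1) ≤ normSum x s (j + 1) := by
    rcases eq_or_ne (blockSup a x s) 0 with h0 | h0
    · exact ⟨n, le_rfl, by simp [h0]⟩
    obtain ⟨j, hnj, hj⟩ := exists_lt_of_lt_biSup_of_forall_lt
      (fun j hj => (blockRatio_le_blockSup hj).lt_of_ne (blockRatio_ne_blockSup_of_forall_ne hb hj))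
      (one_mul (blockSup a x s) ▸ ENNReal.mul_lt_mul_left h0 (hσ s) hθ) n
    have hsj : s ≤ j := (blockStart_le n).trans hnj
    refine ⟨j, hnj, ?_⟩
    rw [blockRatio, ENNReal.lt_div_iff_mul_lt
      (Or.inl (weightSum_pos ha (Nat.lt_succ_of_le hsj)).ne') (Or.inl (weightSum_ne_top _ _))] at hj
    exact hj.le
  have hsj : blockStart a x j = s := blockStart_eq_of_forall_ne hb ((blockStart_le n).trans hnj)
  refine ⟨j + 1, by omega, ?_⟩
  rw [levelSum_succ, levelSum_succ, ← normSum.eq_1, ← weightSum.eq_1, hsj,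
    levelSum_nnnorm_eq_levelSum_ofReal_of_blockStart_eq ha φ (blockStart_blockStart n), level, hsj,
    mul_add]
  gcongr ?_ + ?_
  · exact mul_le_of_le_one_left' hθ.le
  · calc θ * (weightSum a s (j + 1) * (blockSup a x s * φ (blockSup a x s)))
        = θ * blockSup a x s * weightSum a s (j + 1) * φ (blockSup a x s) := by ring
      _ ≤ _ := by gcongr

theorem levelSum_ofReal_le_rpow_of_le_mul_rpow (hpq : p.HolderConjugate q)
    (ha : ∀ n, 0 < a n) (hσ : ∀ m, blockSup a x m ≠ ∞) (φ : ℝ≥0∞ → ℝ≥0∞) {M : ℝ≥0∞}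
    (hM : ∀ m, levelSum a x (fun k => ‖x k‖₊) φ m ≤
      M * levelSum a x (fun k => ENNReal.ofReal (a k)) (fun l => l * φ l) m ^ (1 / p))
    (hfin : ∀ m, levelSum a x (fun k => ENNReal.ofReal (a k)) (fun l => l * φ l) m ≠ ∞)
    (n : ℕ) : levelSum a x (fun k => ENNReal.ofReal (a k)) (fun l => l * φ l) n ≤ M ^ q := by
  rw [← ENNReal.rpow_inv_le_iff hpq.symm.pos, ← one_div]
  refine ENNReal.le_of_forall_lt_one_mul_le fun θ hθ => ?_
  obtain ⟨m, hnm, hm⟩ := exists_ge_mul_levelSum_ofReal_le_levelSum_nnnorm ha hσ φ hθ n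
  calc θ * levelSum a x (fun k => ENNReal.ofReal (a k)) (fun l => l * φ l) n ^ (1 / q)
      ≤ θ * levelSum a x (fun k => ENNReal.ofReal (a k)) (fun l => l * φ l) m ^ (1 / q) := by
        gcongr
        · exact hpq.symm.one_div_nonneg
        · exact levelSum_mono _ _ hnm
    _ ≤ M := ENNReal.mul_rpow_le_of_mul_le_mul_rpow hpq (hfin m) (hm.trans (hM m))

theorem levelSum_ofReal_rpow_le_dDualNorm_rpow (hpq : p.HolderConjugate q) (ha : ∀ n, 0 < a n)
    (hM : dDualNorm a p x ≠ ∞) (n : ℕ) :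
    levelSum a x (fun k => ENNReal.ofReal (a k)) (fun l => l * l ^ (q / p)) n ≤
      dDualNorm a p x ^ q := by
  have hσ := blockSup_ne_top hpq.lt ha hM
  have hqp : 0 ≤ q / p := div_nonneg hpq.symm.nonneg hpq.nonneg
  have hφ : ∀ l : ℝ≥0∞, (l ^ (q / p)) ^ p = l * l ^ (q / p) := fun l => by
    rw [← ENNReal.rpow_mul, div_mul_cancel₀ q hpq.ne_zero, hpq.symm.div_conj_eq_sub_one]
    conv_lhs => rw [← add_sub_cancel (1 : ℝ) q]
    rw [ENNReal.rpow_add_of_nonneg _ _ zero_le_one hpq.symm.sub_one_pos.le, ENNReal.rpow_one]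
  refine levelSum_ofReal_le_rpow_of_le_mul_rpow hpq ha hσ _ (fun m => ?_) (fun m => ?_) n
  · simp only [levelSum, ← hφ]
    exact sum_range_mul_le_dDualNorm_mul hpq.pos ha
      (fun i j h => ENNReal.rpow_le_rpow (level_antitone ha hσ h) hqp)
      (fun k => ENNReal.rpow_ne_top_of_nonneg hqp (hσ _)) m
  · simp [levelSum, ENNReal.sum_eq_top, ENNReal.mul_eq_top, ENNReal.rpow_eq_top_iff, hσ, level, hqp]

theorem coe_nnnorm_levelFactor (hpq : p.HolderConjugate q) (hσ : ∀ m, blockSup a x m ≠ ∞)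
    (k : ℕ) : (‖levelFactor a x p q k‖₊ : ℝ≥0∞) =
      (‖x k‖₊ : ℝ≥0∞) ^ (1 / q) * level a x k ^ (1 / p) :=
  coe_nnnorm_ofReal_toReal <| ENNReal.mul_ne_top
    (ENNReal.rpow_ne_top_of_nonneg hpq.symm.one_div_nonneg ENNReal.coe_ne_top)
    (ENNReal.rpow_ne_top_of_nonneg hpq.one_div_nonneg (hσ _))

theorem levelFactor_ne_zero (hpq : p.HolderConjugate q) (hσ : ∀ m, blockSup a x m ≠ ∞) {k : ℕ}
    (hx : x k ≠ 0) : levelFactor a x p q k ≠ 0 := by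
  rw [← nnnorm_ne_zero_iff, ← ENNReal.coe_ne_zero, coe_nnnorm_levelFactor hpq hσ]
  simp [ENNReal.rpow_eq_zero_iff, hx, level_ne_zero hx, hpq.pos, hpq.symm.pos,
    hpq.pos.not_gt, hpq.symm.pos.not_gt]

theorem lpNorm_levelFactor_le (hpq : p.HolderConjugate q) (ha : ∀ n, 0 < a n)
    (hM : dDualNorm a p x ≠ ∞) : lpNorm q (levelFactor a x p q) ≤ dDualNorm a p x := by
  have hσ := blockSup_ne_top hpq.lt ha hM
  have hrpow : ∀ k, (‖levelFactor a x p q k‖₊ : ℝ≥0∞) ^ q = ‖x k‖₊ * level a x k ^ (q / p) :=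
    fun k => by
      rw [coe_nnnorm_levelFactor hpq hσ, ENNReal.mul_rpow_of_nonneg _ _ hpq.symm.nonneg,
        ← ENNReal.rpow_mul, ← ENNReal.rpow_mul, one_div_mul_cancel hpq.symm.ne_zero,
        ENNReal.rpow_one, one_div_mul_eq_div]
  rw [lpNorm, one_div, ENNReal.rpow_inv_le_iff hpq.symm.pos, ENNReal.tsum_eq_iSup_nat]
  refine iSup_le fun n => ?_
  simp only [hrpow]
  exact (levelSum_nnnorm_le_levelSum_ofReal ha _ n).trans
    (levelSum_ofReal_rpow_le_dDualNorm_rpow hpq ha hM n)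

theorem gNorm_div_levelFactor_le_one (hpq : p.HolderConjugate q) (ha : ∀ n, 0 < a n)
    (hσ : ∀ m, blockSup a x m ≠ ∞) : gNorm a p (fun k => x k / levelFactor a x p q k) ≤ 1 := by
  have hrpow : ∀ k, (‖x k / levelFactor a x p q k‖₊ : ℝ≥0∞) ^ p ≤ ‖x k‖₊ * (level a x k)⁻¹ :=
    fun k => by
      rcases eq_or_ne (x k) 0 with hxk | hxk
      · simp [hxk, ENNReal.zero_rpow_of_pos hpq.pos]
      rw [nnnorm_div, ENNReal.coe_div (nnnorm_ne_zero_iff.2 (levelFactor_ne_zero hpq hσ hxk)),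
        coe_nnnorm_levelFactor hpq hσ,
        ENNReal.div_rpow_mul_rpow_rpow_eq hpq (by simpa using hxk) ENNReal.coe_ne_top,
        div_eq_mul_inv]
  refine iSup_le fun n => ENNReal.rpow_le_one ?_ hpq.one_div_nonneg
  rw [sum_range_ofReal_eq_weightSum, ENNReal.inv_mul_le_iff (weightSum_pos ha n.succ_pos).ne'
    (weightSum_ne_top _ _), mul_one, ← sum_range_ofReal_eq_weightSum]
  calc ∑ k ∈ range (n + 1), (‖x k / levelFactor a x p q k‖₊ : ℝ≥0∞) ^ p
      ≤ levelSum a x (fun k => ‖x k‖₊) (·⁻¹) (n + 1) := sum_le_sum fun k _ => hrpow k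
    _ ≤ levelSum a x (fun k => ENNReal.ofReal (a k)) (fun l => l * l⁻¹) (n + 1) :=
        levelSum_nnnorm_le_levelSum_ofReal ha _ _
    _ ≤ ∑ k ∈ range (n + 1), ENNReal.ofReal (a k) :=
        sum_le_sum fun k _ => mul_le_of_le_one_right' (ENNReal.mul_inv_le_one _)

theorem exists_mul_eq_and_lpNorm_mul_gNorm_le (hpq : p.HolderConjugate q) (ha : ∀ n, 0 < a n)
    (hM : dDualNorm a p x ≠ ∞) :
    ∃ y z : ℕ → ℂ, (∀ n, x n = y n * z n) ∧ lpNorm q y * gNorm a p z ≤ dDualNorm a p x := by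
  have hσ := blockSup_ne_top hpq.lt ha hM
  refine ⟨levelFactor a x p q, fun k => x k / levelFactor a x p q k, fun k => ?_, ?_⟩
  · rcases eq_or_ne (x k) 0 with hxk | hxk
    · simp [hxk]
    · exact (mul_div_cancel₀ _ (levelFactor_ne_zero hpq hσ hxk)).symm
  · simpa using
      mul_le_mul' (lpNorm_levelFactor_le hpq ha hM) (gNorm_div_levelFactor_le_one hpq ha hσ)

end

/-- `(d(p))^* = ℓ^q · g(p)`: products `y·z` with `y ∈ ℓ^q, z ∈ g(p)` act as bounded
functionals on `d(p)` with norm at most `‖y‖_q ‖z‖_{g(p)}`; conversely, any `x`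
bounded on `d(p)` factors as `x = y·z` with `‖y‖_q ‖z‖_{g(p)} ≤ ‖x‖_{(d(p))^*}`. -/
theorem stmt15 (p q : ℝ) (hp : 1 < p) (hq : 1 / p + 1 / q = 1)
    (a : ℕ → ℝ) (ha : ∀ n, 0 < a n) :
    (∀ y z u : ℕ → ℂ,
      (∑' n : ℕ, (‖y n * z n‖₊ : ℝ≥0∞) * (‖u n‖₊ : ℝ≥0∞)) ≤
        lpNorm q y * gNorm a p z * dNorm a p u) ∧
    (∀ x : ℕ → ℂ, dDualNorm a p x < ∞ →
      ∃ y z : ℕ → ℂ, (∀ n, x n = y n * z n) ∧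
        lpNorm q y * gNorm a p z ≤ dDualNorm a p x) := by
  have hpq : p.HolderConjugate q :=
    Real.holderConjugate_iff.2 ⟨hp, by simpa only [one_div] using hq⟩
  exact ⟨tsum_nnnorm_mul_mul_le_lpNorm_gNorm_dNorm hpq ha,
    fun x hx => exists_mul_eq_and_lpNorm_mul_gNorm_le hpq ha hx.ne⟩
end

section
/- Binomial weight inequality: let p > 1 and q its conjugate exponent, and define w_k = C(k − 1 − 1/p, k − 1) (generalized binomial coefficient) for k ∈ ℕ. Then (w_n) is positive and decreasing, and for every k ∈ ℕ: (w_1 + w_2 + ... + w_k)^{p−1} < (kq)^p (w_k^{p−1} − w_{k+1}^{p−1}). -/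
/-!
Summing the recursion `k w_{k+1} = (k - 1/p) w_k` telescopes to `w_1 + ⋯ + w_k = k q w_{k+1}`,
and `w_{k+1} = w_k (1 - x)` with `x = 1/(pk)`. After dividing by `(kq w_k)^{p-1}` the inequality
becomes `(1 - x)^{p-1} (1 + (p - 1) x) < 1`, which follows from `1 - x ≤ e^{-x}` and
`1 + (p - 1) x < e^{(p-1)x}`.
-/

open Real Finset

theorem one_sub_rpow_mul_one_add_mul_lt_one {r x : ℝ} (hr : 0 < r) (hx0 : 0 < x) (hx1 : x ≤ 1) :
    (1 - x) ^ r * (1 + r * x) < 1 :=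
  calc (1 - x) ^ r * (1 + r * x) < exp (-x) ^ r * exp (r * x) :=
        mul_lt_mul' (rpow_le_rpow (by linarith) (one_sub_le_exp_neg x) hr.le)
          (by linarith [add_one_lt_exp (mul_pos hr hx0).ne']) (by positivity) (by positivity)
    _ = 1 := by rw [← exp_mul, ← exp_add]; ring_nf; exact exp_zero

theorem rpow_mul_one_sub_lt_rpow_mul_sub {p c a x : ℝ} (hp : 1 < p) (hc : 0 < c) (ha : 0 < a)
    (hx0 : 0 < x) (hx1 : x ≤ 1) (hcx : c * ((p - 1) * x) = 1) :
    (c * (a * (1 - x))) ^ (p - 1) < c ^ p * (a ^ (p - 1) - (a * (1 - x)) ^ (p - 1)) := by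
  have key := one_sub_rpow_mul_one_add_mul_lt_one (sub_pos.2 hp) hx0 hx1
  have hx : 0 ≤ 1 - x := by linarith
  have hcp : c ^ p = c ^ (p - 1) * c := by rw [← rpow_add_one hc.ne']; ring_nf
  rw [mul_rpow hc.le (mul_nonneg ha.le hx), mul_rpow ha.le hx, hcp]
  set t := (1 - x) ^ (p - 1)
  have ht : t < c * (1 - t) := by
    have hct : c * (t * (1 + (p - 1) * x)) = c * t + t := by linear_combination t * hcx
    linarith [mul_lt_mul_of_pos_left key hc]
  calc c ^ (p - 1) * (a ^ (p - 1) * t) < c ^ (p - 1) * (a ^ (p - 1) * (c * (1 - t))) := by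
        gcongr
    _ = c ^ (p - 1) * c * (a ^ (p - 1) - a ^ (p - 1) * t) := by ring

section BinomialWeights

variable {p : ℝ} {w : ℕ → ℝ}

theorem weight_succ_eq (hrec : ∀ k : ℕ, 1 ≤ k → w (k + 1) = w k * ((k : ℝ) - 1 / p) / k)
    {k : ℕ} (hk : 1 ≤ k) : w (k + 1) = w k * (1 - 1 / (p * k)) := by
  have hk0 : (k : ℝ) ≠ 0 := by positivity
  rw [hrec k hk, mul_div_assoc, sub_div, div_self hk0, div_div]

theorem weight_pos (hp : 1 < p) (hw1 : w 1 = 1)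
    (hrec : ∀ k : ℕ, 1 ≤ k → w (k + 1) = w k * ((k : ℝ) - 1 / p) / k) :
    ∀ k : ℕ, 1 ≤ k → 0 < w k := by
  intro k hk
  induction k, hk using Nat.le_induction with
  | base => rw [hw1]; exact one_pos
  | succ n hn ih =>
    have hn1 : (1 : ℝ) ≤ n := by exact_mod_cast hn
    have hp1 : 1 / p < 1 := (div_lt_one (by linarith)).2 hp
    rw [hrec n hn]
    have : 0 < (n : ℝ) - 1 / p := by linarith
    positivity

theorem weight_succ_lt (hp : 0 < p)
    (hrec : ∀ k : ℕ, 1 ≤ k → w (k + 1) = w k * ((k : ℝ) - 1 / p) / k)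
    {k : ℕ} (hk : 1 ≤ k) (hwk : 0 < w k) : w (k + 1) < w k := by
  rw [weight_succ_eq hrec hk]
  have : 0 < 1 / (p * k) := by positivity
  nlinarith

theorem sum_weights_eq {q : ℝ} (hq : 1 / p + 1 / q = 1) (hq0 : q ≠ 0) (hw1 : w 1 = 1)
    (hrec : ∀ k : ℕ, 1 ≤ k → w (k + 1) = w k * ((k : ℝ) - 1 / p) / k) :
    ∀ k : ℕ, 1 ≤ k → ∑ j ∈ Icc 1 k, w j = k * q * w (k + 1) := by
  have hqp : q * (1 - 1 / p) = 1 := by rw [← eq_sub_of_add_eq' hq, mul_one_div_cancel hq0]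
  intro k hk
  induction k, hk using Nat.le_induction with
  | base => rw [Icc_self, sum_singleton, hrec 1 le_rfl, hw1]; push_cast; linarith
  | succ n hn ih =>
    rw [sum_Icc_succ_top (by omega), ih, hrec (n + 1) (by omega)]
    have : ((n : ℝ) + 1) ≠ 0 := by positivity
    push_cast
    field_simp
    linear_combination (-1 : ℝ) * w (n + 1) * hqp

end BinomialWeights

/-- Bennett's binomial weight inequality: with `w_k = C(k−1−1/p, k−1)`, i.e.
`w_1 = 1` and `w_{k+1} = w_k (k − 1/p)/k`, the sequence `(w_k)` is positive and
decreasing and `(w_1 + ⋯ + w_k)^{p−1} < (kq)^p (w_k^{p−1} − w_{k+1}^{p−1})`. -/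
theorem stmt17 (p q : ℝ) (hp : 1 < p) (hq : 1 / p + 1 / q = 1)
    (w : ℕ → ℝ) (hw1 : w 1 = 1)
    (hrec : ∀ k : ℕ, 1 ≤ k → w (k + 1) = w k * ((k : ℝ) - 1 / p) / k) :
    (∀ k : ℕ, 1 ≤ k → 0 < w k) ∧
    (∀ k : ℕ, 1 ≤ k → w (k + 1) < w k) ∧
    (∀ k : ℕ, 1 ≤ k →
      (∑ j ∈ Finset.Icc 1 k, w j) ^ (p - 1) <
        ((k : ℝ) * q) ^ p * (w k ^ (p - 1) - w (k + 1) ^ (p - 1))) := by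
  have hp0 : 0 < p := by linarith
  have hq0 : 0 < q := one_div_pos.1 (by linarith [(div_lt_one hp0).2 hp])
  have hpos := weight_pos hp hw1 hrec
  refine ⟨hpos, fun k hk => weight_succ_lt hp0 hrec hk (hpos k hk), fun k hk => ?_⟩
  have hk1 : (1 : ℝ) ≤ k := by exact_mod_cast hk
  have hx1 : 1 / (p * k) ≤ 1 := (div_le_one (by positivity)).2 (by nlinarith)
  have hcx : k * q * ((p - 1) * (1 / (p * k))) = 1 := by
    field_simp [hp0.ne', hq0.ne'] at hq ⊢
    linear_combination -hq
  rw [sum_weights_eq hq hq0.ne' hw1 hrec k hk, weight_succ_eq hrec hk]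
  exact rpow_mul_one_sub_lt_rpow_mul_sub hp (by positivity) (hpos k hk) (by positivity) hx1 hcx
end
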